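/- arXiv:1312.7103 — 5 statements merged into one kernel-verified Lean document; each statement's English description precedes it below -/
import Mathlib

section
/- Let f : I ⊆ ℝ \ {0} → ℝ be harmonically convex and a, b ∈ I with a < b, f integrable on [a,b]. Then f(2ab/(a+b)) ≤ (ab/(b-a)) ∫_a^b f(x)/x² dx ≤ (f(a)+f(b))/2. -/
/-!
Substituting `x = 1/u` turns a harmonically convex `f` into the convex function `u ↦ f (1/u)`
on `[1/b, 1/a]` and the weighted integral `∫_a^b f(x)/x² dx` into `∫_{1/b}^{1/a} f(1/u) du`.
The claim is then the classical Hermite–Hadamard inequality for this convex function, which in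
turn follows by integrating `2 g((c+d)/2) ≤ g x + g (c+d-x) ≤ g c + g d` over `[c, d]`.
-/

open MeasureTheory Set intervalIntegral

def HarmonicallyConvexOn (I : Set ℝ) (f : ℝ → ℝ) : Prop :=
  ∀ x ∈ I, ∀ y ∈ I, ∀ t ∈ Icc (0 : ℝ) 1,
    f (x * y / (t * x + (1 - t) * y)) ≤ t * f y + (1 - t) * f x

theorem HarmonicallyConvexOn.convexOn_comp_inv {I s : Set ℝ} {f : ℝ → ℝ}
    (hf : HarmonicallyConvexOn I f) (hs : Convex ℝ s) (hs0 : (0 : ℝ) ∉ s)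
    (hsI : MapsTo (·⁻¹) s I) : ConvexOn ℝ s (fun u => f u⁻¹) := by
  refine ⟨hs, fun x hx y hy t r ht hr htr => ?_⟩
  have hx0 : x ≠ 0 := ne_of_mem_of_not_mem hx hs0
  have hy0 : y ≠ 0 := ne_of_mem_of_not_mem hy hs0
  obtain rfl : r = 1 - t := by linarith
  have key := hf _ (hsI hy) _ (hsI hx) t ⟨ht, by linarith⟩
  have harg : y⁻¹ * x⁻¹ / (t * y⁻¹ + (1 - t) * x⁻¹) = (t * x + (1 - t) * y)⁻¹ := by
    field_simp
  simpa only [harg, smul_eq_mul] using key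

section HermiteHadamard

variable {g : ℝ → ℝ} {c d : ℝ}

theorem integral_comp_reflect {E : Type*} [NormedAddCommGroup E] [NormedSpace ℝ E]
    (g : ℝ → E) (c d : ℝ) :
    ∫ x in c..d, g (c + d - x) = ∫ x in c..d, g x := by
  simp [integral_comp_sub_left]

theorem ConvexOn.map_add_map_reflect_le (hg : ConvexOn ℝ (Icc c d) g) (hcd : c < d) {x : ℝ}
    (hx : x ∈ Icc c d) : g x + g (c + d - x) ≤ g c + g d := by
  set t := (d - x) / (d - c)
  have hdc : 0 < d - c := sub_pos.2 hcd
  have ht : t ∈ Icc (0 : ℝ) 1 :=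
    ⟨div_nonneg (by linarith [hx.2]) hdc.le, (div_le_one hdc).2 (by linarith [hx.1])⟩
  have hxt : t * c + (1 - t) * d = x := by
    simp only [t]; field_simp; ring
  have hc : c ∈ Icc c d := left_mem_Icc.2 hcd.le
  have hd : d ∈ Icc c d := right_mem_Icc.2 hcd.le
  have h₁ := hg.2 hc hd ht.1 (sub_nonneg.2 ht.2) (add_sub_cancel t 1)
  have h₂ := hg.2 hc hd (sub_nonneg.2 ht.2) ht.1 (sub_add_cancel 1 t)
  simp only [smul_eq_mul, hxt] at h₁ h₂
  rw [show (1 - t) * c + t * d = c + d - x by linarith] at h₂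
  linarith

theorem ConvexOn.hermite_hadamard (hg : ConvexOn ℝ (Icc c d) g) (hcd : c < d)
    (hint : IntervalIntegrable g volume c d) :
    g ((c + d) / 2) ≤ (d - c)⁻¹ * ∫ x in c..d, g x ∧
      (d - c)⁻¹ * ∫ x in c..d, g x ≤ (g c + g d) / 2 := by
  have hreflect : ∀ x ∈ Icc c d, c + d - x ∈ Icc c d := fun x hx =>
    ⟨by linarith [hx.2], by linarith [hx.1]⟩
  have hint' : IntervalIntegrable (fun x => g (c + d - x)) volume c d := by
    simpa using (hint.comp_sub_left (c + d)).symm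
  have hsum : ∫ x in c..d, (g x + g (c + d - x)) = 2 * ∫ x in c..d, g x := by
    rw [integral_add hint hint', integral_comp_reflect]
    ring
  have hlower : ∀ x ∈ Icc c d, 2 * g ((c + d) / 2) ≤ g x + g (c + d - x) := by
    intro x hx
    have := hg.2 hx (hreflect x hx) one_half_pos.le one_half_pos.le (add_halves 1)
    simp only [smul_eq_mul] at this
    rw [show 1 / 2 * x + 1 / 2 * (c + d - x) = (c + d) / 2 by ring] at this
    linarith
  have hle := integral_mono_on hcd.le intervalIntegrable_const (hint.add hint') hlower
  have hge := integral_mono_on hcd.le (hint.add hint') intervalIntegrable_const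
    fun x hx => hg.map_add_map_reflect_le hcd hx
  simp only [intervalIntegral.integral_const, smul_eq_mul, hsum] at hle hge
  have hdc : 0 < d - c := sub_pos.2 hcd
  constructor
  · rw [le_inv_mul_iff₀ hdc]; linarith
  · rw [inv_mul_le_iff₀ hdc]; linarith

end HermiteHadamard

section InvIcc

variable {K : Type*} [Field K] [LinearOrder K] [IsStrictOrderedRing K] {a b x y : K}

theorem inv_le_inv_of_mul_pos (h : 0 < x * y) : x⁻¹ ≤ y⁻¹ ↔ y ≤ x := by
  rw [← sub_nonpos, inv_sub_inv (left_ne_zero_of_mul h.ne') (right_ne_zero_of_mul h.ne'),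
    div_le_iff₀ h, zero_mul, sub_nonpos]

theorem inv_lt_inv_of_mul_pos (h : 0 < x * y) : x⁻¹ < y⁻¹ ↔ y < x := by
  rw [← sub_neg, inv_sub_inv (left_ne_zero_of_mul h.ne') (right_ne_zero_of_mul h.ne'),
    div_lt_iff₀ h, zero_mul, sub_neg]

theorem mul_pos_of_mem_Icc_of_mul_pos (h : 0 < a * b) (hx : x ∈ Icc a b) :
    0 < a * x ∧ 0 < x * b := by
  rcases pos_and_pos_or_neg_and_neg_of_mul_pos h with ⟨ha, -⟩ | ⟨-, hb⟩
  · have hx0 : 0 < x := ha.trans_le hx.1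
    exact ⟨mul_pos ha hx0, mul_pos hx0 (hx0.trans_le hx.2)⟩
  · have hx0 : x < 0 := hx.2.trans_lt hb
    exact ⟨mul_pos_of_neg_of_neg (hx.1.trans_lt hx0) hx0, mul_pos_of_neg_of_neg hx0 hb⟩

theorem inv_mem_Icc_of_mul_pos (h : 0 < a * b) (hx : x ∈ Icc a b) : x⁻¹ ∈ Icc b⁻¹ a⁻¹ := by
  obtain ⟨hax, hxb⟩ := mul_pos_of_mem_Icc_of_mul_pos h hx
  exact ⟨(inv_le_inv_of_mul_pos (by rwa [mul_comm])).2 hx.2,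
    (inv_le_inv_of_mul_pos (by rwa [mul_comm])).2 hx.1⟩

theorem image_inv_Icc_of_mul_pos (h : 0 < a * b) : (·⁻¹) '' Icc a b = Icc b⁻¹ a⁻¹ := by
  refine Subset.antisymm (image_subset_iff.2 fun x hx => inv_mem_Icc_of_mul_pos h hx)
    fun u hu => ?_
  have h' : 0 < b⁻¹ * a⁻¹ := mul_inv_rev a b ▸ inv_pos.2 h
  exact ⟨u⁻¹, by simpa using inv_mem_Icc_of_mul_pos h' hu, inv_inv u⟩

theorem mul_pos_of_zero_notMem_Icc (hab : a ≤ b) (h0 : (0 : K) ∉ Icc a b) : 0 < a * b := by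
  by_contra! h
  rcases mul_nonpos_iff.1 h with ⟨ha, hb⟩ | ⟨ha, hb⟩
  · exact h0 ⟨by linarith, by linarith⟩
  · exact h0 ⟨ha, hb⟩

end InvIcc

section Reciprocal

variable {a b : ℝ} (f : ℝ → ℝ)

theorem abs_deriv_inv_smul_comp_inv (x : ℝ) : |-(x ^ 2)⁻¹| • f x⁻¹⁻¹ = f x / x ^ 2 := by
  rw [abs_neg, abs_of_nonneg (inv_nonneg.2 (sq_nonneg x)), inv_inv, smul_eq_mul,
    div_eq_inv_mul]

theorem hasDerivWithinAt_inv_of_mul_pos (h : 0 < a * b) {x : ℝ} (hx : x ∈ Icc a b) :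
    HasDerivWithinAt (·⁻¹) (-(x ^ 2)⁻¹) (Icc a b) x :=
  (hasDerivAt_inv (left_ne_zero_of_mul (mul_pos_of_mem_Icc_of_mul_pos h hx).2.ne')).hasDerivWithinAt

theorem IntervalIntegrable.comp_inv_of_mul_pos (h : 0 < a * b) (hab : a ≤ b)
    (hf : IntervalIntegrable f volume a b) :
    IntervalIntegrable (fun u => f u⁻¹) volume b⁻¹ a⁻¹ := by
  have hweight : ContinuousOn (fun x : ℝ => (x ^ 2)⁻¹) (uIcc a b) := by
    refine (continuousOn_pow 2).inv₀ fun x hx => pow_ne_zero 2 ?_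
    rw [uIcc_of_le hab] at hx
    exact left_ne_zero_of_mul (mul_pos_of_mem_Icc_of_mul_pos h hx).2.ne'
  have hdiv := hf.mul_continuousOn hweight
  rw [intervalIntegrable_iff_integrableOn_Icc_of_le hab] at hdiv
  rw [intervalIntegrable_iff_integrableOn_Icc_of_le ((inv_le_inv_of_mul_pos (by linarith)).2 hab),
    ← image_inv_Icc_of_mul_pos h, integrableOn_image_iff_integrableOn_abs_deriv_smul
      measurableSet_Icc (fun _ => hasDerivWithinAt_inv_of_mul_pos h) inv_injective.injOn]
  simpa only [abs_deriv_inv_smul_comp_inv, div_eq_mul_inv] using hdiv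

theorem integral_div_sq_eq_integral_comp_inv (h : 0 < a * b) (hab : a ≤ b) :
    ∫ x in a..b, f x / x ^ 2 = ∫ u in b⁻¹..a⁻¹, f u⁻¹ := by
  rw [integral_of_le hab, integral_of_le ((inv_le_inv_of_mul_pos (by linarith)).2 hab),
    ← integral_Icc_eq_integral_Ioc, ← integral_Icc_eq_integral_Ioc, ← image_inv_Icc_of_mul_pos h,
    integral_image_eq_integral_abs_deriv_smul measurableSet_Icc
      (fun _ => hasDerivWithinAt_inv_of_mul_pos h) inv_injective.injOn]
  simp only [abs_deriv_inv_smul_comp_inv]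

end Reciprocal

theorem stmt_1 (I : Set ℝ) (hI : I.OrdConnected) (hI0 : ∀ x ∈ I, x ≠ 0)
    (f : ℝ → ℝ)
    (hf : ∀ x ∈ I, ∀ y ∈ I, ∀ t ∈ Set.Icc (0:ℝ) 1,
      f (x * y / (t * x + (1 - t) * y)) ≤ t * f y + (1 - t) * f x)
    (a b : ℝ) (ha : a ∈ I) (hb : b ∈ I) (hab : a < b)
    (hint : IntervalIntegrable f MeasureTheory.volume a b) :
    f (2 * a * b / (a + b)) ≤ (a * b / (b - a)) * ∫ x in a..b, f x / x ^ 2 ∧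
    (a * b / (b - a)) * ∫ x in a..b, f x / x ^ 2 ≤ (f a + f b) / 2 := by
  have hsub : Icc a b ⊆ I := hI.out ha hb
  have h0 : 0 < a * b := mul_pos_of_zero_notMem_Icc hab.le fun h => hI0 0 (hsub h) rfl
  have ha0 : a ≠ 0 := left_ne_zero_of_mul h0.ne'
  have hb0 : b ≠ 0 := right_ne_zero_of_mul h0.ne'
  have h0' : 0 < b⁻¹ * a⁻¹ := mul_inv_rev a b ▸ inv_pos.2 h0
  have hinv : b⁻¹ < a⁻¹ := (inv_lt_inv_of_mul_pos (by linarith)).2 hab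
  have hconv : ConvexOn ℝ (Icc b⁻¹ a⁻¹) (fun u => f u⁻¹) :=
    HarmonicallyConvexOn.convexOn_comp_inv hf (convex_Icc _ _)
      (fun h => (mul_pos_of_mem_Icc_of_mul_pos h0' h).1.ne' (mul_zero _))
      (fun u hu => hsub (by simpa using inv_mem_Icc_of_mul_pos h0' hu))
  obtain ⟨hl, hr⟩ := hconv.hermite_hadamard hinv (hint.comp_inv_of_mul_pos f h0 hab.le)
  have hcoef : (a⁻¹ - b⁻¹)⁻¹ = a * b / (b - a) := by
    rw [inv_sub_inv ha0 hb0, inv_div]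
  have hmid : (b⁻¹ + a⁻¹) / 2 = (2 * a * b / (a + b))⁻¹ := by
    rw [inv_div]; field_simp
  rw [integral_div_sq_eq_integral_comp_inv f h0 hab.le, ← hcoef]
  simp only [hmid, inv_inv] at hl hr
  exact ⟨hl, by linarith⟩
end

section
/- Let f : I ⊆ (0,∞) → ℝ be harmonically convex on [a,b] with a < b and f ∈ L¹[a,b], and α > 0. Then the second fractional Hermite–Hadamard inequality holds: α [∫_0^1 t^{α−1} f(ab/(tb+(1−t)a)) dt + ∫_0^1 t^{α−1} f(ab/(ta+(1−t)b)) dt] ≤ f(a) + f(b). -/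
/-!
Under `u = x⁻¹` harmonic convexity becomes ordinary convexity, so
`g t = f (a b / (t b + (1 - t) a))` is convex on `[0, 1]`, with `g 0 = f b` and `g 1 = f a`.
Convexity gives `g t + g (1 - t) ≤ g 0 + g 1`, and integrating against `t ^ (α - 1)`, whose mass
on `[0, 1]` is `1 / α`, yields the inequality. Both integrands are integrable because a convex
function on a compact interval is bounded, and measurable as it is continuous on the interior.
-/

open MeasureTheory Set

def HarmonicConvexOn (s : Set ℝ) (f : ℝ → ℝ) : Prop :=
  ∀ x ∈ s, ∀ y ∈ s, ∀ t ∈ Icc (0:ℝ) 1,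
    f (x * y / (t * x + (1 - t) * y)) ≤ t * f y + (1 - t) * f x

section ConvexOnIcc

variable {g : ℝ → ℝ}

lemma ConvexOn.bddBelow_image_Icc {x y : ℝ} (hg : ConvexOn ℝ (Icc x y) g) :
    BddBelow (g '' Icc x y) := by
  refine ⟨2 * g ((x + y) / 2) - max (g x) (g y), ?_⟩
  rintro _ ⟨t, ht, rfl⟩
  have hxy : x ≤ y := ht.1.trans ht.2
  have ht' : x + y - t ∈ Icc x y := ⟨by linarith [ht.2], by linarith [ht.1]⟩
  have hmid := hg.2 ht ht' (by norm_num : (0:ℝ) ≤ 1 / 2) (by norm_num : (0:ℝ) ≤ 1 / 2)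
    (by norm_num)
  have hreflect := hg.le_max_of_mem_Icc (left_mem_Icc.2 hxy) (right_mem_Icc.2 hxy) ht'
  simp only [smul_eq_mul] at hmid
  rw [show 1 / 2 * t + 1 / 2 * (x + y - t) = (x + y) / 2 by ring] at hmid
  linarith

lemma ConvexOn.isBounded_image_Icc {x y : ℝ} (hg : ConvexOn ℝ (Icc x y) g) :
    Bornology.IsBounded (g '' Icc x y) := by
  refine isBounded_iff_bddBelow_bddAbove.2 ⟨hg.bddBelow_image_Icc, max (g x) (g y), ?_⟩
  rintro _ ⟨t, ht, rfl⟩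
  have hxy : x ≤ y := ht.1.trans ht.2
  exact hg.le_max_of_mem_Icc (left_mem_Icc.2 hxy) (right_mem_Icc.2 hxy) ht

lemma ConvexOn.intervalIntegrable_mul {w : ℝ → ℝ} {x y : ℝ} (hxy : x ≤ y)
    (hg : ConvexOn ℝ (Icc x y) g) (hw : IntervalIntegrable w volume x y) :
    IntervalIntegrable (fun t => w t * g t) volume x y := by
  obtain ⟨C, hC⟩ := (Metric.isBounded_iff_subset_closedBall 0).1 hg.isBounded_image_Icc
  have hcont : ContinuousOn g (Ioo x y) := by
    simpa only [interior_Icc] using hg.continuousOn_interior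
  have hIoo : IntegrableOn (fun t => w t * g t) (Ioo x y) := by
    refine Integrable.mul_bdd (hw.1.mono_set Ioo_subset_Ioc_self)
      (hcont.aestronglyMeasurable measurableSet_Ioo) (c := C) ?_
    filter_upwards [ae_restrict_mem measurableSet_Ioo] with t ht
    simpa using hC ⟨t, Ioo_subset_Icc_self ht, rfl⟩
  rw [intervalIntegrable_iff_integrableOn_Ioc_of_le hxy]
  exact hIoo.congr_set_ae Ioo_ae_eq_Ioc.symm

lemma ConvexOn.comp_one_sub (hg : ConvexOn ℝ (Icc 0 1) g) :
    ConvexOn ℝ (Icc 0 1) (fun t => g (1 - t)) := by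
  refine ((hg.comp_affineMap (AffineMap.lineMap 1 0)).subset ?_ (convex_Icc 0 1)).congr ?_
  · intro t ht
    simp only [mem_preimage, AffineMap.lineMap_apply_ring', mem_Icc]
    constructor <;> linarith [ht.1, ht.2]
  · intro t _
    rw [Function.comp_apply, AffineMap.lineMap_apply_ring']
    ring_nf

lemma ConvexOn.add_comp_one_sub_le (hg : ConvexOn ℝ (Icc 0 1) g) {t : ℝ} (ht : t ∈ Icc 0 1) :
    g t + g (1 - t) ≤ g 0 + g 1 := by
  have h0 : (0:ℝ) ∈ Icc 0 1 := left_mem_Icc.2 zero_le_one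
  have h1 : (1:ℝ) ∈ Icc 0 1 := right_mem_Icc.2 zero_le_one
  have hle := hg.2 h0 h1 (sub_nonneg.2 ht.2) ht.1 (sub_add_cancel 1 t)
  have hle' := hg.2 h0 h1 ht.1 (sub_nonneg.2 ht.2) (add_sub_cancel t 1)
  simp only [smul_eq_mul, mul_zero, mul_one, zero_add] at hle hle'
  linarith

theorem ConvexOn.fractional_hermiteHadamard (hg : ConvexOn ℝ (Icc 0 1) g) {α : ℝ}
    (hα : 0 < α) :
    α * ((∫ t in (0:ℝ)..1, t ^ (α - 1) * g t) +
        ∫ t in (0:ℝ)..1, t ^ (α - 1) * g (1 - t)) ≤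
      g 0 + g 1 := by
  have hw : IntervalIntegrable (fun t : ℝ => t ^ (α - 1)) volume 0 1 :=
    intervalIntegral.intervalIntegrable_rpow' (by linarith)
  have hmass : ∫ t in (0:ℝ)..1, t ^ (α - 1) = 1 / α := by
    rw [integral_rpow (Or.inl (by linarith)), sub_add_cancel, Real.one_rpow,
      Real.zero_rpow hα.ne', sub_zero]
  have hint := hg.intervalIntegrable_mul zero_le_one hw
  have hint' := hg.comp_one_sub.intervalIntegrable_mul zero_le_one hw
  have hsum : (∫ t in (0:ℝ)..1, t ^ (α - 1) * g t) +
      ∫ t in (0:ℝ)..1, t ^ (α - 1) * g (1 - t) ≤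
        ∫ t in (0:ℝ)..1, t ^ (α - 1) * (g 0 + g 1) := by
    rw [← intervalIntegral.integral_add hint hint']
    refine intervalIntegral.integral_mono_on zero_le_one (hint.add hint') (hw.mul_const _)
      fun t ht => ?_
    rw [← mul_add]
    exact mul_le_mul_of_nonneg_left (hg.add_comp_one_sub_le ht) (Real.rpow_nonneg ht.1 _)
  rw [intervalIntegral.integral_mul_const, hmass] at hsum
  calc _ ≤ α * (1 / α * (g 0 + g 1)) := mul_le_mul_of_nonneg_left hsum hα.le
    _ = g 0 + g 1 := by field_simp

end ConvexOnIcc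

namespace HarmonicConvexOn

variable {f : ℝ → ℝ} {a b : ℝ}

lemma convexOn_comp_inv (ha : 0 < a) (hb : 0 < b) (hf : HarmonicConvexOn (Icc a b) f) :
    ConvexOn ℝ (Icc b⁻¹ a⁻¹) (fun u => f u⁻¹) := by
  have hpos : ∀ u ∈ Icc b⁻¹ a⁻¹, 0 < u := fun u hu => (inv_pos.2 hb).trans_le hu.1
  have hinv : ∀ u ∈ Icc b⁻¹ a⁻¹, u⁻¹ ∈ Icc a b := fun u hu =>
    ⟨(le_inv_comm₀ ha (hpos u hu)).2 hu.2, (inv_le_comm₀ (hpos u hu) hb).2 hu.1⟩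
  refine ⟨convex_Icc _ _, fun u hu v hv μ ν hμ hν hμν => ?_⟩
  obtain rfl : ν = 1 - μ := by linarith
  have key := hf v⁻¹ (hinv v hv) u⁻¹ (hinv u hu) μ ⟨hμ, by linarith⟩
  have hu0 := hpos u hu
  have hv0 := hpos v hv
  rwa [show v⁻¹ * u⁻¹ / (μ * v⁻¹ + (1 - μ) * u⁻¹) = (μ • u + (1 - μ) • v)⁻¹ by
    rw [smul_eq_mul, smul_eq_mul]; field_simp] at key

lemma convexOn_comp_harmonicMean (ha : 0 < a) (hab : a ≤ b)
    (hf : HarmonicConvexOn (Icc a b) f) :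
    ConvexOn ℝ (Icc 0 1) (fun t => f (a * b / (t * b + (1 - t) * a))) := by
  have hb : 0 < b := ha.trans_le hab
  refine (((hf.convexOn_comp_inv ha hb).comp_affineMap
    (AffineMap.lineMap b⁻¹ a⁻¹)).subset ?_ (convex_Icc 0 1)).congr ?_
  · intro t ht
    have hgap : 0 ≤ a⁻¹ - b⁻¹ := sub_nonneg.2 (inv_anti₀ ha hab)
    simp only [mem_preimage, AffineMap.lineMap_apply_ring', mem_Icc]
    constructor <;> nlinarith [ht.1, ht.2]
  · intro t _
    simp only [Function.comp_apply, AffineMap.lineMap_apply_ring']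
    congr 1
    field_simp
    ring

end HarmonicConvexOn

theorem stmt_6_general (f : ℝ → ℝ) (a b : ℝ) (ha : 0 < a) (hab : a < b)
    (hf : ∀ x ∈ Set.Icc a b, ∀ y ∈ Set.Icc a b, ∀ t ∈ Set.Icc (0:ℝ) 1,
      f (x * y / (t * x + (1 - t) * y)) ≤ t * f y + (1 - t) * f x)
    (α : ℝ) (hα : 0 < α) :
    α * ((∫ t in (0:ℝ)..1, t ^ (α - 1) * f (a * b / (t * b + (1 - t) * a))) +
        ∫ t in (0:ℝ)..1, t ^ (α - 1) * f (a * b / (t * a + (1 - t) * b))) ≤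
      f a + f b := by
  have hreflect (t : ℝ) :
      a * b / (t * a + (1 - t) * b) = a * b / ((1 - t) * b + (1 - (1 - t)) * a) := by
    ring_nf
  simp only [hreflect]
  have hHH :=
    (HarmonicConvexOn.convexOn_comp_harmonicMean ha hab.le hf).fractional_hermiteHadamard hα
  simp only [zero_mul, one_mul, sub_zero, zero_add, sub_self, add_zero] at hHH
  rwa [mul_div_cancel_right₀ a (ha.trans hab).ne', mul_div_cancel_left₀ b ha.ne',
    add_comm (f b)] at hHH

theorem stmt_6 (f : ℝ → ℝ) (a b : ℝ) (ha : 0 < a) (hab : a < b)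
    (hf : ∀ x ∈ Set.Icc a b, ∀ y ∈ Set.Icc a b, ∀ t ∈ Set.Icc (0:ℝ) 1,
      f (x * y / (t * x + (1 - t) * y)) ≤ t * f y + (1 - t) * f x)
    (hint : IntervalIntegrable f MeasureTheory.volume a b)
    (α : ℝ) (hα : 0 < α) :
    α * ((∫ t in (0:ℝ)..1, t ^ (α - 1) * f (a * b / (t * b + (1 - t) * a))) +
        ∫ t in (0:ℝ)..1, t ^ (α - 1) * f (a * b / (t * a + (1 - t) * b))) ≤
      f a + f b :=
  stmt_6_general f a b ha hab hf α hα
end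

section
/- For 0 < a < b, α > 0 and A_t = ta + (1−t)b: ∫_0^1 t [(1−t)^α + t^α]/A_t² dt = (b^{−2}/(α+2)) [(1/(α+1)) ₂F₁(2,2;α+3;1−a/b) + ₂F₁(2,α+2;α+3;1−a/b)]. -/
noncomputable def F21 (p q c z : ℝ) : ℝ :=
  (Real.Gamma c / (Real.Gamma q * Real.Gamma (c - q))) *
    ∫ s in (0:ℝ)..1, s ^ (q - 1) * (1 - s) ^ (c - q - 1) * (1 - z * s) ^ (-p)

/-! With `z = 1 - a / b` one has `A_t = b (1 - z t)`, so after factoring out `b⁻²` the two halves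
`t (1 - t)^α` and `t^(α+1)` of the integrand are exactly the Euler integrands of
`₂F₁(2, 2; α + 3; z)` and `₂F₁(2, α + 2; α + 3; z)`; the Gamma prefactors reduce to
`(α + 2)(α + 1)` and `α + 2`. -/

open Real Set intervalIntegral

lemma rpow_neg_two (x : ℝ) : x ^ (-(2:ℝ)) = (x ^ 2)⁻¹ := by
  rw [show -(2:ℝ) = ((-2 : ℤ) : ℝ) by norm_num, rpow_intCast, zpow_neg, zpow_ofNat]

lemma integral_div_sq_affine (f : ℝ → ℝ) {a b : ℝ} (hb : b ≠ 0) (u v : ℝ) :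
    ∫ t in u..v, f t / (t * a + (1 - t) * b) ^ 2 =
      b ^ (-(2:ℝ)) * ∫ t in u..v, f t * (1 - (1 - a / b) * t) ^ (-(2:ℝ)) := by
  rw [← integral_const_mul]
  congr 1 with t
  have hA : t * a + (1 - t) * b = b * (1 - (1 - a / b) * t) := by field_simp; ring
  rw [hA, rpow_neg_two, rpow_neg_two, mul_pow, div_eq_mul_inv, mul_inv]
  ring

lemma one_sub_mul_pos {z t : ℝ} (hz : z < 1) (ht : t ∈ Icc (0:ℝ) 1) : 0 < 1 - z * t := by
  rcases le_or_gt z 0 with h | h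
  · nlinarith [ht.1]
  · nlinarith [ht.2]

lemma continuousOn_one_sub_mul_rpow {z : ℝ} (hz : z < 1) (p : ℝ) :
    ContinuousOn (fun t => (1 - z * t) ^ p) (Icc 0 1) :=
  (continuous_const.sub (continuous_const.mul continuous_id)).continuousOn.rpow_const
    fun _ ht => Or.inl (one_sub_mul_pos hz ht).ne'

lemma F21_q_two (p c z : ℝ) (hc : 2 < c) :
    F21 p 2 c z =
      (c - 1) * (c - 2) * ∫ s in (0:ℝ)..1, s * (1 - s) ^ (c - 3) * (1 - z * s) ^ (-p) := by
  have hΓ : Gamma c = (c - 1) * (c - 2) * Gamma (c - 2) := by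
    conv_lhs => rw [show c = c - 2 + 1 + 1 by ring]
    rw [Gamma_add_one (by linarith), Gamma_add_one (by linarith)]
    ring_nf
  have hΓ_ne : Gamma (c - 2) ≠ 0 := (Gamma_pos_of_pos (by linarith)).ne'
  rw [F21]
  congr 1
  · rw [hΓ, Gamma_two]
    field_simp
  · simp only [show (2:ℝ) - 1 = 1 by norm_num, rpow_one, show c - 2 - 1 = c - 3 by ring]

lemma F21_add_one (p q z : ℝ) (hq : 0 < q) :
    F21 p q (q + 1) z = q * ∫ s in (0:ℝ)..1, s ^ (q - 1) * (1 - z * s) ^ (-p) := by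
  have hΓ_ne : Gamma q ≠ 0 := (Gamma_pos_of_pos hq).ne'
  rw [F21]
  congr 1
  · rw [Gamma_add_one hq.ne', add_sub_cancel_left, Gamma_one]
    field_simp
  · simp only [show q + 1 - q - 1 = 0 by ring, rpow_zero, mul_one]

lemma integral_mul_add_rpow_mul_rpow {α z : ℝ} (hα : 0 ≤ α) (hz : z < 1) (p : ℝ) :
    ∫ t in (0:ℝ)..1, t * ((1 - t) ^ α + t ^ α) * (1 - z * t) ^ p =
      (∫ t in (0:ℝ)..1, t * (1 - t) ^ α * (1 - z * t) ^ p) +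
        ∫ t in (0:ℝ)..1, t ^ (α + 1) * (1 - z * t) ^ p := by
  have hw := continuousOn_one_sub_mul_rpow hz p
  have hi₁ : IntervalIntegrable (fun t => t * (1 - t) ^ α * (1 - z * t) ^ p)
      MeasureTheory.volume 0 1 :=
    ((continuousOn_id.mul ((continuous_const.sub continuous_id).continuousOn.rpow_const
      fun _ _ => Or.inr hα)).mul hw).intervalIntegrable_of_Icc zero_le_one
  have hi₂ : IntervalIntegrable (fun t => t ^ (α + 1) * (1 - z * t) ^ p)
      MeasureTheory.volume 0 1 :=
    ((continuousOn_id.rpow_const fun _ _ => Or.inr (by linarith)).mul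
      hw).intervalIntegrable_of_Icc zero_le_one
  rw [← integral_add hi₁ hi₂]
  refine integral_congr fun t ht => ?_
  rw [uIcc_of_le zero_le_one] at ht
  simp only [rpow_add_one' ht.1 (by linarith : α + 1 ≠ 0)]
  ring

theorem stmt_13 (a b α : ℝ) (ha : 0 < a) (hab : a < b) (hα : 0 < α) :
    ∫ t in (0:ℝ)..1, t * ((1 - t) ^ α + t ^ α) / (t * a + (1 - t) * b) ^ 2 =
      (b ^ (-(2:ℝ)) / (α + 2)) *
        ((1 / (α + 1)) * F21 2 2 (α + 3) (1 - a / b) + F21 2 (α + 2) (α + 3) (1 - a / b)) := by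
  have hb : 0 < b := ha.trans hab
  set z := 1 - a / b
  have hz : z < 1 := by have := div_pos ha hb; linarith
  rw [integral_div_sq_affine _ hb.ne', integral_mul_add_rpow_mul_rpow hα.le hz,
    F21_q_two _ _ _ (by linarith), show α + 3 = α + 2 + 1 by ring,
    F21_add_one _ _ _ (by linarith)]
  simp only [show α + 2 + 1 - 3 = α by ring, show α + 2 + 1 - 1 = α + 2 by ring,
    show α + 2 - 1 = α + 1 by ring, show α + 2 + 1 - 2 = α + 1 by ring]
  -- hide the integrals so that `field_simp` does not rewrite their integrands
  generalize (∫ t in (0:ℝ)..1, t * (1 - t) ^ α * (1 - z * t) ^ (-(2:ℝ))) = I₁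
  generalize (∫ t in (0:ℝ)..1, t ^ (α + 1) * (1 - z * t) ^ (-(2:ℝ))) = I₂
  field_simp
end

section
/- Let f : I ⊆ (0,∞) → ℝ be differentiable, a, b ∈ I° with a < b, f' ∈ L¹[a,b], q > 1 with 1/p + 1/q = 1, α > 0, and |f'|^q harmonically convex on [a,b]. Then |I_f(g;α,a,b)| ≤ (a(b−a)/(2b)) (1/(αp+1))^{1/p} ((|f'(b)|^q + |f'(a)|^q)/2)^{1/q} [₂F₁^{1/p}(2p,1;αp+2;1−a/b) + ₂F₁^{1/p}(2p,αp+1;αp+2;1−a/b)]. -/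
/-!
Let `ψ t = a b / (t a + (1 - t) b)`, the path from `a` to `b` along which harmonic convexity of
`|f'|^q` is stated. Since `1 / ψ` is affine, substituting `x = 1 / ψ t` turns the two
Riemann–Liouville integrals of `f ∘ (1 / ·)` into `∫₀¹ t^(α-1) f (ψ t)` and
`∫₀¹ (1-t)^(α-1) f (ψ t)`, and integrating by parts shows that the left-hand side equals
`a b (b - a) / 2 * ∫₀¹ (t^α - (1-t)^α) f' (ψ t) / (t a + (1 - t) b)^2`.
Hölder's inequality bounds each half by the `q`-norm of `f' ∘ ψ`, which harmonic convexity bounds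
by `((|f' a|^q + |f' b|^q) / 2)^(1/q)`, times the `p`-norm of the weight, whose `p`-th power is an
Euler integral of a Gauss hypergeometric function.
-/

noncomputable def Jplus (α a : ℝ) (h : ℝ → ℝ) (x : ℝ) : ℝ :=
  (1 / Real.Gamma α) * ∫ t in a..x, (x - t) ^ (α - 1) * h t

noncomputable def Jminus (α b : ℝ) (h : ℝ → ℝ) (x : ℝ) : ℝ :=
  (1 / Real.Gamma α) * ∫ t in x..b, (t - x) ^ (α - 1) * h t

open MeasureTheory Set

lemma F21_succ_eq_integral {r : ℝ} (hr : -1 < r) (P z : ℝ) :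
    F21 P (r + 1) (r + 2) z = (r + 1) * ∫ s in (0:ℝ)..1, s ^ r * (1 - z * s) ^ (-P) := by
  have hΓ : Real.Gamma (r + 1) ≠ 0 := (Real.Gamma_pos_of_pos (by linarith)).ne'
  rw [F21, show r + 2 - (r + 1) = 1 by ring, show r + 2 = (r + 1) + 1 by ring,
    Real.Gamma_add_one (by linarith), Real.Gamma_one]
  simp only [add_sub_cancel_right, sub_self, Real.rpow_zero, mul_one]
  field_simp

lemma F21_one_eq_integral {r : ℝ} (hr : -1 < r) (P z : ℝ) :
    F21 P 1 (r + 2) z = (r + 1) * ∫ s in (0:ℝ)..1, (1 - s) ^ r * (1 - z * s) ^ (-P) := by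
  have hΓ : Real.Gamma (r + 1) ≠ 0 := (Real.Gamma_pos_of_pos (by linarith)).ne'
  rw [F21, show r + 2 - 1 = r + 1 by ring, show r + 2 = (r + 1) + 1 by ring,
    Real.Gamma_add_one (by linarith), Real.Gamma_one]
  simp only [add_sub_cancel_right, sub_self, Real.rpow_zero, one_mul]
  field_simp
  simp only [mul_comm z]

lemma Jplus_eq_integral_unitInterval (α : ℝ) (h : ℝ → ℝ) {u v : ℝ} (huv : u < v) :
    Jplus α u h v =
      (v - u) ^ α / Real.Gamma α * ∫ s in (0:ℝ)..1, s ^ (α - 1) * h (v - (v - u) * s) := by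
  have hvu : 0 < v - u := sub_pos.2 huv
  have hsub := intervalIntegral.smul_integral_comp_sub_mul
    (fun t => (v - t) ^ (α - 1) * h t) (a := 0) (b := 1) (v - u) v
  simp only [mul_zero, sub_zero, mul_one, sub_sub_cancel, smul_eq_mul] at hsub
  have hpow : ∀ s ∈ uIcc (0:ℝ) 1, ((v - u) * s) ^ (α - 1) * h (v - (v - u) * s)
      = (v - u) ^ (α - 1) * (s ^ (α - 1) * h (v - (v - u) * s)) := by
    intro s hs
    rw [uIcc_of_le zero_le_one] at hs
    rw [Real.mul_rpow hvu.le hs.1, mul_assoc]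
  rw [Jplus, ← hsub, intervalIntegral.integral_congr hpow, intervalIntegral.integral_const_mul,
    Real.rpow_sub_one hvu.ne']
  field_simp

lemma Jminus_eq_integral_unitInterval (α : ℝ) (h : ℝ → ℝ) {u v : ℝ} (huv : u < v) :
    Jminus α v h u =
      (v - u) ^ α / Real.Gamma α * ∫ s in (0:ℝ)..1, (1 - s) ^ (α - 1) * h (v - (v - u) * s) := by
  have hvu : 0 < v - u := sub_pos.2 huv
  have hsub := intervalIntegral.smul_integral_comp_sub_mul
    (fun t => (t - u) ^ (α - 1) * h t) (a := 0) (b := 1) (v - u) v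
  simp only [mul_zero, sub_zero, mul_one, sub_sub_cancel, smul_eq_mul] at hsub
  have hpow : ∀ s ∈ uIcc (0:ℝ) 1, (v - (v - u) * s - u) ^ (α - 1) * h (v - (v - u) * s)
      = (v - u) ^ (α - 1) * ((1 - s) ^ (α - 1) * h (v - (v - u) * s)) := by
    intro s hs
    rw [uIcc_of_le zero_le_one] at hs
    rw [show v - (v - u) * s - u = (v - u) * (1 - s) by ring,
      Real.mul_rpow hvu.le (by linarith [hs.2]), mul_assoc]
  rw [Jminus, ← hsub, intervalIntegral.integral_congr hpow, intervalIntegral.integral_const_mul,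
    Real.rpow_sub_one hvu.ne']
  field_simp

lemma integral_rpow_sub_one_mul_eq {α : ℝ} (hα : 0 < α) {Φ Φ' : ℝ → ℝ}
    (hΦ : ContinuousOn Φ (Icc 0 1)) (hΦ' : ∀ s ∈ Ioo (0:ℝ) 1, HasDerivAt Φ (Φ' s) s)
    (hint : IntervalIntegrable Φ' volume 0 1) :
    α * ∫ s in (0:ℝ)..1, s ^ (α - 1) * Φ s = Φ 1 - ∫ s in (0:ℝ)..1, s ^ α * Φ' s := by
  have hu : ContinuousOn (fun s : ℝ => s ^ α) (uIcc 0 1) :=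
    continuousOn_id.rpow_const fun _ _ => Or.inr hα.le
  have hu' : ∀ s ∈ Ioo (min (0:ℝ) 1) (max 0 1), HasDerivAt (fun s : ℝ => s ^ α)
      (α * s ^ (α - 1)) s := fun s hs =>
    Real.hasDerivAt_rpow_const (Or.inl (by
      simp only [zero_le_one, min_eq_left, max_eq_right, mem_Ioo] at hs
      exact hs.1.ne'))
  have hibp := intervalIntegral.integral_mul_deriv_eq_deriv_mul_of_hasDerivAt hu
    (by rwa [uIcc_of_le zero_le_one]) hu' (by simpa using hΦ')
    ((intervalIntegral.intervalIntegrable_rpow' (by linarith)).const_mul α) hint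
  simp only [Real.one_rpow, Real.zero_rpow hα.ne', one_mul, zero_mul, sub_zero, mul_assoc,
    intervalIntegral.integral_const_mul] at hibp
  linarith

lemma integral_one_sub_rpow_sub_one_mul_eq {α : ℝ} (hα : 0 < α) {Φ Φ' : ℝ → ℝ}
    (hΦ : ContinuousOn Φ (Icc 0 1)) (hΦ' : ∀ s ∈ Ioo (0:ℝ) 1, HasDerivAt Φ (Φ' s) s)
    (hint : IntervalIntegrable Φ' volume 0 1) :
    α * ∫ s in (0:ℝ)..1, (1 - s) ^ (α - 1) * Φ s = Φ 0 + ∫ s in (0:ℝ)..1, (1 - s) ^ α * Φ' s := by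
  have hu : ContinuousOn (fun s : ℝ => (1 - s) ^ α) (uIcc 0 1) :=
    (continuousOn_const.sub continuousOn_id).rpow_const fun _ _ => Or.inr hα.le
  have hu' : ∀ s ∈ Ioo (min (0:ℝ) 1) (max 0 1), HasDerivAt (fun s : ℝ => (1 - s) ^ α)
      (-(α * (1 - s) ^ (α - 1))) s := fun s hs => by
    simp only [zero_le_one, min_eq_left, max_eq_right, mem_Ioo] at hs
    simpa using ((hasDerivAt_id s).const_sub 1).rpow_const (p := α)
      (Or.inl (by simp only [id]; linarith))
  have hint' : IntervalIntegrable (fun s : ℝ => (1 - s) ^ (α - 1)) volume 0 1 := by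
    simpa using ((intervalIntegral.intervalIntegrable_rpow' (a := 0) (b := 1)
      (by linarith)).comp_sub_left 1).symm
  have hibp := intervalIntegral.integral_mul_deriv_eq_deriv_mul_of_hasDerivAt hu
    (by rwa [uIcc_of_le zero_le_one]) hu' (by simpa using hΦ') (hint'.const_mul α).neg hint
  simp only [sub_self, sub_zero, Real.one_rpow, Real.zero_rpow hα.ne', one_mul, zero_mul,
    neg_mul, mul_assoc, intervalIntegral.integral_neg, intervalIntegral.integral_const_mul] at hibp
  linarith

lemma abs_intervalIntegral_mul_le_Lp_mul_Lq {p q : ℝ} (hpq : p.HolderConjugate q) {a b : ℝ}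
    (hab : a ≤ b) {f g : ℝ → ℝ} (hf : MemLp f (ENNReal.ofReal p) (volume.restrict (Ioc a b)))
    (hg : MemLp g (ENNReal.ofReal q) (volume.restrict (Ioc a b))) :
    |∫ x in a..b, f x * g x| ≤
      (∫ x in a..b, |f x| ^ p) ^ (1 / p) * (∫ x in a..b, |g x| ^ q) ^ (1 / q) := by
  simp only [intervalIntegral.integral_of_le hab]
  calc |∫ x in Ioc a b, f x * g x| ≤ ∫ x in Ioc a b, ‖f x‖ * ‖g x‖ := by
        simpa only [norm_mul, Real.norm_eq_abs] using
          norm_integral_le_integral_norm (fun x => f x * g x)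
    _ ≤ _ := integral_mul_norm_le_Lp_mul_Lq hpq hf hg

lemma aestronglyMeasurable_comp_of_hasDerivAt {f f' ψ : ℝ → ℝ} {μ : Measure ℝ} {s : Set ℝ}
    (hs : MeasurableSet s) (hψ : Measurable ψ)
    (hf : ∀ t ∈ s, HasDerivAt f (f' (ψ t)) (ψ t)) :
    AEStronglyMeasurable (fun t => f' (ψ t)) (μ.restrict s) :=
  ((measurable_deriv f).comp hψ).aestronglyMeasurable.congr <|
    (ae_restrict_mem hs).mono fun t ht => (hf t ht).deriv

lemma memLp_of_norm_rpow_le {α : Type*} [MeasurableSpace α] {μ : Measure α} {g h : α → ℝ}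
    {q : ℝ} (hq : 0 < q) (hg : AEStronglyMeasurable g μ) (hh : Integrable h μ)
    (hle : ∀ᵐ x ∂μ, ‖g x‖ ^ q ≤ h x) : MemLp g (ENNReal.ofReal q) μ := by
  rw [← integrable_norm_rpow_iff hg (by simpa using hq) ENNReal.ofReal_ne_top,
    ENNReal.toReal_ofReal hq.le]
  refine hh.mono' (hg.norm.aemeasurable.pow_const q).aestronglyMeasurable ?_
  filter_upwards [hle] with x hx
  rwa [Real.norm_of_nonneg (by positivity)]

lemma intervalIntegral_le_of_le_affine {g : ℝ → ℝ} (hg : IntervalIntegrable g volume 0 1)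
    {A B : ℝ} (hle : ∀ t ∈ Icc (0:ℝ) 1, g t ≤ t * A + (1 - t) * B) :
    ∫ t in (0:ℝ)..1, g t ≤ (A + B) / 2 := by
  have haff : ∫ t in (0:ℝ)..1, (t * A + (1 - t) * B) = (A + B) / 2 := by
    rw [intervalIntegral.integral_add (by apply Continuous.intervalIntegrable; fun_prop)
      (by apply Continuous.intervalIntegrable; fun_prop)]
    simp only [intervalIntegral.integral_mul_const, integral_id,
      intervalIntegral.integral_comp_sub_left (fun t => t)]
    ring
  rw [← haff]
  exact intervalIntegral.integral_mono_on zero_le_one hg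
    (by apply Continuous.intervalIntegrable; fun_prop) hle

lemma ContinuousOn.memLp_restrict_Ioc {f : ℝ → ℝ} {a b : ℝ} (hf : ContinuousOn f (Icc a b))
    (p : ENNReal) : MemLp f p (volume.restrict (Ioc a b)) := by
  obtain ⟨C, hC⟩ := isCompact_Icc.exists_bound_of_continuousOn hf
  exact MemLp.of_bound ((hf.mono Ioc_subset_Icc_self).aestronglyMeasurable measurableSet_Ioc) C
    ((ae_restrict_mem measurableSet_Ioc).mono fun x hx => hC x (Ioc_subset_Icc_self hx))

noncomputable def harmonicPath (a b t : ℝ) : ℝ := a * b / (t * a + (1 - t) * b)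

section HarmonicPath

variable {a b t : ℝ}

lemma mul_add_one_sub_mul_pos (ha : 0 < a) (hb : 0 < b) (ht : t ∈ Icc (0:ℝ) 1) :
    0 < t * a + (1 - t) * b := by
  rcases ht.1.eq_or_lt with rfl | ht0
  · simpa using hb
  · nlinarith [ht.2]

lemma harmonicPath_zero (hb : b ≠ 0) : harmonicPath a b 0 = a := by
  simp [harmonicPath, hb]

lemma harmonicPath_one (ha : a ≠ 0) : harmonicPath a b 1 = b := by
  simp [harmonicPath, ha]

lemma harmonicPath_mem_Icc (ha : 0 < a) (hab : a ≤ b) (ht : t ∈ Icc (0:ℝ) 1) :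
    harmonicPath a b t ∈ Icc a b := by
  have hb : 0 < b := ha.trans_le hab
  have hD := mul_add_one_sub_mul_pos ha hb ht
  constructor
  · rw [harmonicPath, le_div_iff₀ hD]
    nlinarith [mul_nonneg ha.le (mul_nonneg ht.1 (sub_nonneg.2 hab))]
  · rw [harmonicPath, div_le_iff₀ hD]
    nlinarith [mul_nonneg hb.le (mul_nonneg (sub_nonneg.2 ht.2) (sub_nonneg.2 hab))]

lemma hasDerivAt_harmonicPath (hD : t * a + (1 - t) * b ≠ 0) :
    HasDerivAt (harmonicPath a b) (a * b * (b - a) / (t * a + (1 - t) * b) ^ 2) t := by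
  have hden : HasDerivAt (fun t => t * a + (1 - t) * b) (a - b) t :=
    (((hasDerivAt_id t).mul_const a).add
      (((hasDerivAt_id t).const_sub 1).mul_const b)).congr_deriv (by ring)
  exact ((hasDerivAt_const t (a * b)).div hden hD).congr_deriv (by ring)

lemma measurable_harmonicPath : Measurable (harmonicPath a b) :=
  measurable_const.div (by fun_prop)

lemma one_div_sub_mul_eq_harmonicPath (ha : a ≠ 0) (hb : b ≠ 0) :
    1 / (1 / a - (1 / a - 1 / b) * t) = harmonicPath a b t := by
  rw [harmonicPath, show 1 / a - (1 / a - 1 / b) * t = (t * a + (1 - t) * b) / (a * b) by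
    field_simp; ring, one_div_div]

end HarmonicPath

lemma memLp_comp_harmonicPath {f f' : ℝ → ℝ} {a b q A B : ℝ} (ha : 0 < a) (hab : a ≤ b)
    (hq : 0 < q) (hf : ∀ x ∈ Icc a b, HasDerivAt f (f' x) x)
    (hbound : ∀ t ∈ Icc (0:ℝ) 1, |f' (harmonicPath a b t)| ^ q ≤ t * B + (1 - t) * A) :
    MemLp (fun t => f' (harmonicPath a b t)) (ENNReal.ofReal q) (volume.restrict (Ioc 0 1)) :=
  memLp_of_norm_rpow_le hq
    (aestronglyMeasurable_comp_of_hasDerivAt measurableSet_Ioc measurable_harmonicPath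
      fun t ht => hf _ (harmonicPath_mem_Icc ha hab (Ioc_subset_Icc_self ht)))
    (by fun_prop : Continuous fun t : ℝ => t * B + (1 - t) * A).integrableOn_Ioc
    ((ae_restrict_mem measurableSet_Ioc).mono fun t ht => hbound t (Ioc_subset_Icc_self ht))

lemma Jplus_comp_one_div {a b : ℝ} (ha : 0 < a) (hab : a < b) (α : ℝ) (f : ℝ → ℝ) :
    Jplus α (1 / b) (f ∘ fun x => 1 / x) (1 / a) = (1 / a - 1 / b) ^ α / Real.Gamma α *
      ∫ s in (0:ℝ)..1, s ^ (α - 1) * f (harmonicPath a b s) := by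
  rw [Jplus_eq_integral_unitInterval α _ (one_div_lt_one_div_of_lt ha hab)]
  simp only [Function.comp_apply,
    one_div_sub_mul_eq_harmonicPath ha.ne' (ha.trans hab).ne']

lemma Jminus_comp_one_div {a b : ℝ} (ha : 0 < a) (hab : a < b) (α : ℝ) (f : ℝ → ℝ) :
    Jminus α (1 / a) (f ∘ fun x => 1 / x) (1 / b) = (1 / a - 1 / b) ^ α / Real.Gamma α *
      ∫ s in (0:ℝ)..1, (1 - s) ^ (α - 1) * f (harmonicPath a b s) := by
  rw [Jminus_eq_integral_unitInterval α _ (one_div_lt_one_div_of_lt ha hab)]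
  simp only [Function.comp_apply,
    one_div_sub_mul_eq_harmonicPath ha.ne' (ha.trans hab).ne']

lemma Gamma_add_one_mul_rpow_mul_rpow_div_Gamma {a b α : ℝ} (ha : 0 < a) (hab : a < b)
    (hα : 0 < α) :
    Real.Gamma (α + 1) * (a * b / (b - a)) ^ α * ((1 / a - 1 / b) ^ α / Real.Gamma α) = α := by
  have hb : 0 < b := ha.trans hab
  have hba : 0 < b - a := sub_pos.2 hab
  rw [Real.Gamma_add_one hα.ne', mul_assoc, mul_div_assoc', ← Real.mul_rpow
    (by positivity) (by rw [sub_nonneg]; gcongr),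
    show a * b / (b - a) * (1 / a - 1 / b) = 1 by field_simp, Real.one_rpow]
  field_simp [(Real.Gamma_pos_of_pos hα).ne']

theorem fractional_trapezoid_identity {f f' : ℝ → ℝ} {a b α : ℝ} (ha : 0 < a) (hab : a < b)
    (hα : 0 < α) (hf : ∀ x ∈ Icc a b, HasDerivAt f (f' x) x)
    (hf' : IntervalIntegrable (fun t => f' (harmonicPath a b t)) volume 0 1) :
    (f a + f b) / 2 - (Real.Gamma (α + 1) / 2) * (a * b / (b - a)) ^ α *
        (Jminus α (1 / a) (f ∘ fun x => 1 / x) (1 / b) +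
          Jplus α (1 / b) (f ∘ fun x => 1 / x) (1 / a)) =
      a * b * (b - a) / 2 *
        ((∫ t in (0:ℝ)..1, t ^ α / (t * a + (1 - t) * b) ^ 2 * f' (harmonicPath a b t)) -
          ∫ t in (0:ℝ)..1, (1 - t) ^ α / (t * a + (1 - t) * b) ^ 2 * f' (harmonicPath a b t)) := by
  have hb : 0 < b := ha.trans hab
  set D : ℝ → ℝ := fun t => t * a + (1 - t) * b
  set Φ' : ℝ → ℝ := fun t => f' (harmonicPath a b t) * (a * b * (b - a) / D t ^ 2)
  have hΦ : ∀ t ∈ Icc (0:ℝ) 1, HasDerivAt (fun t => f (harmonicPath a b t)) (Φ' t) t :=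
    fun t ht => (hf _ (harmonicPath_mem_Icc ha hab.le ht)).comp t
      (hasDerivAt_harmonicPath (mul_add_one_sub_mul_pos ha hb ht).ne')
  have hΦc : ContinuousOn (fun t => f (harmonicPath a b t)) (Icc 0 1) := fun t ht =>
    (hΦ t ht).continuousAt.continuousWithinAt
  have hΦo : ∀ t ∈ Ioo (0:ℝ) 1, HasDerivAt (fun t => f (harmonicPath a b t)) (Φ' t) t :=
    fun t ht => hΦ t (Ioo_subset_Icc_self ht)
  have hΦ' : IntervalIntegrable Φ' volume 0 1 := by
    refine hf'.mul_continuousOn (continuousOn_const.div (by fun_prop) fun t ht => ?_)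
    rw [uIcc_of_le zero_le_one] at ht
    exact pow_ne_zero 2 (mul_add_one_sub_mul_pos ha hb ht).ne'
  have hpull : ∀ w : ℝ → ℝ, ∫ t in (0:ℝ)..1, w t * Φ' t =
      a * b * (b - a) * ∫ t in (0:ℝ)..1, w t / D t ^ 2 * f' (harmonicPath a b t) := fun w => by
    rw [← intervalIntegral.integral_const_mul]
    exact intervalIntegral.integral_congr fun t _ => by simp only [Φ']; ring
  rw [Jminus_comp_one_div ha hab, Jplus_comp_one_div ha hab]
  set I₁ := ∫ s in (0:ℝ)..1, (1 - s) ^ (α - 1) * f (harmonicPath a b s)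
  set I₂ := ∫ s in (0:ℝ)..1, s ^ (α - 1) * f (harmonicPath a b s)
  calc _ = (f a + f b) / 2 - α * I₁ / 2 - α * I₂ / 2 := by
        linear_combination (-(I₁ + I₂) / 2) * Gamma_add_one_mul_rpow_mul_rpow_div_Gamma ha hab hα
    _ = _ := by
      rw [integral_rpow_sub_one_mul_eq hα hΦc hΦo hΦ',
        integral_one_sub_rpow_sub_one_mul_eq hα hΦc hΦo hΦ', hpull, hpull,
        harmonicPath_zero hb.ne', harmonicPath_one ha.ne']
      ring

lemma rpow_div_sq_rpow_eq {a b u t α p : ℝ} (ha : 0 < a) (hb : 0 < b) (hu : 0 ≤ u)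
    (ht : t ∈ Icc (0:ℝ) 1) :
    |u ^ α / (t * a + (1 - t) * b) ^ 2| ^ p =
      u ^ (α * p) * (1 - (1 - a / b) * t) ^ (-(2 * p)) / b ^ (2 * p) := by
  have hD := mul_add_one_sub_mul_pos ha hb ht
  have hDb : t * a + (1 - t) * b = b * (1 - (1 - a / b) * t) := by field_simp; ring
  have hz : 0 < 1 - (1 - a / b) * t := by
    rw [hDb] at hD
    exact pos_of_mul_pos_right hD hb.le
  rw [abs_of_nonneg (by positivity), Real.div_rpow (by positivity) (by positivity),
    ← Real.rpow_mul hu, ← Real.rpow_natCast, ← Real.rpow_mul hD.le, hDb,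
    Real.mul_rpow hb.le hz.le, Real.rpow_neg hz.le]
  push_cast
  field_simp

lemma integral_rpow_div_sq_rpow {a b α p : ℝ} (ha : 0 < a) (hb : 0 < b) (hα : 0 ≤ α)
    (hp : 0 ≤ p) :
    ∫ t in (0:ℝ)..1, |t ^ α / (t * a + (1 - t) * b) ^ 2| ^ p =
      F21 (2 * p) (α * p + 1) (α * p + 2) (1 - a / b) / ((α * p + 1) * b ^ (2 * p)) := by
  have hαp : 0 ≤ α * p := mul_nonneg hα hp
  rw [F21_succ_eq_integral (by linarith), mul_div_mul_left _ _ (by positivity),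
    ← intervalIntegral.integral_div]
  refine intervalIntegral.integral_congr fun t ht => ?_
  rw [uIcc_of_le zero_le_one] at ht
  exact rpow_div_sq_rpow_eq ha hb ht.1 ht

lemma integral_one_sub_rpow_div_sq_rpow {a b α p : ℝ} (ha : 0 < a) (hb : 0 < b) (hα : 0 ≤ α)
    (hp : 0 ≤ p) :
    ∫ t in (0:ℝ)..1, |(1 - t) ^ α / (t * a + (1 - t) * b) ^ 2| ^ p =
      F21 (2 * p) 1 (α * p + 2) (1 - a / b) / ((α * p + 1) * b ^ (2 * p)) := by
  have hαp : 0 ≤ α * p := mul_nonneg hα hp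
  rw [F21_one_eq_integral (by linarith), mul_div_mul_left _ _ (by positivity),
    ← intervalIntegral.integral_div]
  refine intervalIntegral.integral_congr fun t ht => ?_
  rw [uIcc_of_le zero_le_one] at ht
  exact rpow_div_sq_rpow_eq ha hb (sub_nonneg.2 ht.2) ht

lemma rpow_one_div_eq_of_eq_div {X F c b p : ℝ} (hX : 0 ≤ X) (hc : 0 < c) (hb : 0 < b)
    (hp : 0 < p) (h : X = F / (c * b ^ (2 * p))) :
    X ^ (1 / p) = (1 / c) ^ (1 / p) * F ^ (1 / p) / b ^ 2 := by
  have hF : F = X * c * b ^ (2 * p) := by rw [h]; field_simp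
  have hc' : 0 < c ^ (1 / p) := by positivity
  rw [hF, Real.mul_rpow (by positivity) (by positivity), Real.mul_rpow hX hc.le,
    ← Real.rpow_mul hb.le, show 2 * p * (1 / p) = 2 by field_simp, Real.rpow_two,
    Real.div_rpow zero_le_one hc.le, Real.one_rpow]
  field_simp

theorem abs_weighted_integral_sub_le {g : ℝ → ℝ} {a b α p q M : ℝ} (ha : 0 < a) (hab : a ≤ b)
    (hα : 0 ≤ α) (hpq : p.HolderConjugate q)
    (hg : MemLp g (ENNReal.ofReal q) (volume.restrict (Ioc 0 1)))
    (hgM : ∫ t in (0:ℝ)..1, |g t| ^ q ≤ M) :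
    |a * b * (b - a) / 2 *
        ((∫ t in (0:ℝ)..1, t ^ α / (t * a + (1 - t) * b) ^ 2 * g t) -
          ∫ t in (0:ℝ)..1, (1 - t) ^ α / (t * a + (1 - t) * b) ^ 2 * g t)| ≤
      a * (b - a) / (2 * b) * (1 / (α * p + 1)) ^ (1 / p) * M ^ (1 / q) *
        (F21 (2 * p) 1 (α * p + 2) (1 - a / b) ^ (1 / p) +
          F21 (2 * p) (α * p + 1) (α * p + 2) (1 - a / b) ^ (1 / p)) := by
  have hb : 0 < b := ha.trans_le hab
  have hp := hpq.pos
  have hq := hpq.symm.pos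
  have hαp : 0 < α * p + 1 := by positivity
  have hholder : ∀ u : ℝ → ℝ, ContinuousOn u (Icc 0 1) →
      |∫ t in (0:ℝ)..1, u t / (t * a + (1 - t) * b) ^ 2 * g t| ≤
        (∫ t in (0:ℝ)..1, |u t / (t * a + (1 - t) * b) ^ 2| ^ p) ^ (1 / p) * M ^ (1 / q) := by
    intro u hu
    have hw : ContinuousOn (fun t => u t / (t * a + (1 - t) * b) ^ 2) (Icc 0 1) :=
      hu.div (by fun_prop) fun t ht => pow_ne_zero 2 (mul_add_one_sub_mul_pos ha hb ht).ne'
    refine (abs_intervalIntegral_mul_le_Lp_mul_Lq hpq zero_le_one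
      (hw.memLp_restrict_Ioc _) hg).trans (mul_le_mul_of_nonneg_left ?_ (Real.rpow_nonneg
        (intervalIntegral.integral_nonneg zero_le_one fun _ _ => by positivity) _))
    exact Real.rpow_le_rpow (intervalIntegral.integral_nonneg zero_le_one fun _ _ => by
      positivity) hgM (by positivity)
  have hweight : ∀ u : ℝ → ℝ, ∀ F : ℝ,
      ∫ t in (0:ℝ)..1, |u t / (t * a + (1 - t) * b) ^ 2| ^ p = F / ((α * p + 1) * b ^ (2 * p)) →
      (∫ t in (0:ℝ)..1, |u t / (t * a + (1 - t) * b) ^ 2| ^ p) ^ (1 / p) =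
        (1 / (α * p + 1)) ^ (1 / p) * F ^ (1 / p) / b ^ 2 := fun u F hF =>
    rpow_one_div_eq_of_eq_div (intervalIntegral.integral_nonneg zero_le_one fun _ _ => by
      positivity) hαp hb hp hF
  have h₁ := hholder (fun t => t ^ α) (continuousOn_id.rpow_const fun _ _ => Or.inr hα)
  have h₂ := hholder (fun t => (1 - t) ^ α)
    ((continuousOn_const.sub continuousOn_id).rpow_const fun _ _ => Or.inr hα)
  rw [hweight _ _ (integral_rpow_div_sq_rpow ha hb hα hp.le)] at h₁
  rw [hweight _ _ (integral_one_sub_rpow_div_sq_rpow ha hb hα hp.le)] at h₂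
  have hK : 0 ≤ a * b * (b - a) / 2 := by have := sub_nonneg.2 hab; positivity
  calc _ ≤ a * b * (b - a) / 2 * (|∫ t in (0:ℝ)..1, t ^ α / (t * a + (1 - t) * b) ^ 2 * g t| +
          |∫ t in (0:ℝ)..1, (1 - t) ^ α / (t * a + (1 - t) * b) ^ 2 * g t|) := by
        rw [abs_mul, abs_of_nonneg hK]
        exact mul_le_mul_of_nonneg_left (abs_sub _ _) hK
    _ ≤ _ := by
        refine (mul_le_mul_of_nonneg_left (add_le_add h₁ h₂) hK).trans_eq ?_
        field_simp
        ring

theorem stmt_14_general (I : Set ℝ) (hI : I.OrdConnected) (hIpos : I ⊆ Set.Ioi (0:ℝ))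
    (f f' : ℝ → ℝ) (hdiff : ∀ x ∈ interior I, HasDerivAt f (f' x) x)
    (a b : ℝ) (ha : a ∈ interior I) (hb : b ∈ interior I) (hab : a < b)
    (p q : ℝ) (hq : 1 < q) (hpq : 1/p + 1/q = 1) (α : ℝ) (hα : 0 < α)
    (hconv : ∀ x ∈ Set.Icc a b, ∀ y ∈ Set.Icc a b, ∀ t ∈ Set.Icc (0:ℝ) 1,
      |f' (x * y / (t * x + (1 - t) * y))| ^ q ≤ t * |f' y| ^ q + (1 - t) * |f' x| ^ q)
    (g : ℝ → ℝ) (hg : g = fun x => 1 / x) :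
    |(f a + f b) / 2 - (Real.Gamma (α + 1) / 2) * (a * b / (b - a)) ^ α *
        (Jminus α (1 / a) (f ∘ g) (1 / b) + Jplus α (1 / b) (f ∘ g) (1 / a))| ≤
      (a * (b - a) / (2 * b)) * (1 / (α * p + 1)) ^ (1/p) *
        ((|f' b| ^ q + |f' a| ^ q) / 2) ^ (1/q) *
        ((F21 (2*p) 1 (α*p + 2) (1 - a/b)) ^ (1/p) +
         (F21 (2*p) (α*p + 1) (α*p + 2) (1 - a/b)) ^ (1/p)) := by
  subst hg
  have ha₀ : 0 < a := hIpos (interior_subset ha)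
  have hq₀ : 0 < q := one_pos.trans hq
  have hpq' : p.HolderConjugate q :=
    (Real.holderConjugate_iff.2 ⟨hq, by rw [add_comm]; simpa only [one_div] using hpq⟩).symm
  have hf : ∀ x ∈ Icc a b, HasDerivAt f (f' x) x := fun x hx =>
    hdiff x (hI.interior.out ha hb hx)
  have hconvψ : ∀ t ∈ Icc (0:ℝ) 1,
      |f' (harmonicPath a b t)| ^ q ≤ t * |f' b| ^ q + (1 - t) * |f' a| ^ q := fun t ht =>
    hconv a (left_mem_Icc.2 hab.le) b (right_mem_Icc.2 hab.le) t ht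
  have hLq := memLp_comp_harmonicPath ha₀ hab.le hq₀ hf hconvψ
  have hL1 : IntervalIntegrable (fun t => f' (harmonicPath a b t)) volume 0 1 :=
    (intervalIntegrable_iff_integrableOn_Ioc_of_le zero_le_one).2
      (hLq.integrable (by simpa using hq.le))
  have hLq' : IntervalIntegrable (fun t => |f' (harmonicPath a b t)| ^ q) volume 0 1 := by
    have h := hLq.integrable_norm_rpow'
    simp only [ENNReal.toReal_ofReal hq₀.le, Real.norm_eq_abs] at h
    exact (intervalIntegrable_iff_integrableOn_Ioc_of_le zero_le_one).2 h
  rw [fractional_trapezoid_identity ha₀ hab hα hf hL1]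
  exact abs_weighted_integral_sub_le ha₀ hab.le hα.le hpq' hLq
    (intervalIntegral_le_of_le_affine hLq' hconvψ)

theorem stmt_14 (I : Set ℝ) (hI : I.OrdConnected) (hIpos : I ⊆ Set.Ioi (0:ℝ))
    (f f' : ℝ → ℝ) (hdiff : ∀ x ∈ interior I, HasDerivAt f (f' x) x)
    (a b : ℝ) (ha : a ∈ interior I) (hb : b ∈ interior I) (hab : a < b)
    (hint : IntervalIntegrable f' MeasureTheory.volume a b)
    (p q : ℝ) (hq : 1 < q) (hpq : 1/p + 1/q = 1) (α : ℝ) (hα : 0 < α)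
    (hconv : ∀ x ∈ Set.Icc a b, ∀ y ∈ Set.Icc a b, ∀ t ∈ Set.Icc (0:ℝ) 1,
      |f' (x * y / (t * x + (1 - t) * y))| ^ q ≤ t * |f' y| ^ q + (1 - t) * |f' x| ^ q)
    (g : ℝ → ℝ) (hg : g = fun x => 1 / x) :
    |(f a + f b) / 2 - (Real.Gamma (α + 1) / 2) * (a * b / (b - a)) ^ α *
        (Jminus α (1 / a) (f ∘ g) (1 / b) + Jplus α (1 / b) (f ∘ g) (1 / a))| ≤
      (a * (b - a) / (2 * b)) * (1 / (α * p + 1)) ^ (1/p) *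
        ((|f' b| ^ q + |f' a| ^ q) / 2) ^ (1/q) *
        ((F21 (2*p) 1 (α*p + 2) (1 - a/b)) ^ (1/p) +
         (F21 (2*p) (α*p + 1) (α*p + 2) (1 - a/b)) ^ (1/p)) :=
  stmt_14_general I hI hIpos f f' hdiff a b ha hb hab p q hq hpq α hα hconv g hg
end

section
/- Let f : I ⊆ (0,∞) → ℝ be differentiable, a, b ∈ I° with a < b, f' ∈ L¹[a,b], q > 1 with 1/p + 1/q = 1, 0 < α ≤ 1, and |f'|^q harmonically convex on [a,b]. Then |I_f(g;α,a,b)| ≤ (a(b−a)/(2b)) (1/(αp+1))^{1/p} · ((₂F₁(2q,2;3;1−a/b)|f'(b)|^q + ₂F₁(2q,1;3;1−a/b)|f'(a)|^q)/2)^{1/q}. -/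
/-!
Substituting `t = 1/x` and then `1/x = (1/a - 1/b) u + 1/b` turns both Riemann–Liouville
integrals of `f ∘ (1/·)` into integrals over `[0, 1]` of `f (ab / (u b + (1 - u) a))` against
`u ^ (α - 1)` and `(1 - u) ^ (α - 1)`. Integrating by parts expresses `I_f` as
`ab(b - a)/2 · ∫₀¹ ((1 - u)^α - u^α) f'(ab/A_u) / A_u²` with `A_u = u b + (1 - u) a`.
Then `|(1 - u)^α - u^α| ≤ |1 - 2u|^α` (subadditivity of `x ↦ x^α`), Hölder's inequality,
`∫₀¹ |1 - 2u|^{αp} = 1/(αp + 1)` and harmonic convexity of `|f'|^q` bound it; the remaining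
integrals `∫₀¹ u A_u^{-2q}` and `∫₀¹ (1 - u) A_u^{-2q}` are Euler integrals for
`₂F₁(2q, ·; 3; 1 - a/b)`.
-/

open MeasureTheory Set

lemma rpow_sub_rpow_le_rpow_sub {x y α : ℝ} (hy : 0 ≤ y) (hyx : y ≤ x) (hα0 : 0 ≤ α)
    (hα1 : α ≤ 1) : x ^ α - y ^ α ≤ (x - y) ^ α := by
  have h := Real.rpow_add_le_add_rpow (sub_nonneg.2 hyx) hy hα0 hα1
  rw [sub_add_cancel] at h
  linarith

lemma abs_one_sub_rpow_sub_rpow_le {α u : ℝ} (hα0 : 0 ≤ α) (hα1 : α ≤ 1) (hu0 : 0 ≤ u)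
    (hu1 : u ≤ 1) : |(1 - u) ^ α - u ^ α| ≤ |1 - 2 * u| ^ α := by
  rcases le_total u (1 / 2) with h | h
  · have hle : u ^ α ≤ (1 - u) ^ α := Real.rpow_le_rpow hu0 (by linarith) hα0
    rw [abs_of_nonneg (sub_nonneg.2 hle), abs_of_nonneg (by linarith)]
    convert rpow_sub_rpow_le_rpow_sub (x := 1 - u) hu0 (by linarith) hα0 hα1 using 2
    ring
  · have hle : (1 - u) ^ α ≤ u ^ α := Real.rpow_le_rpow (by linarith) (by linarith) hα0
    rw [abs_of_nonpos (sub_nonpos.2 hle), abs_of_nonpos (by linarith), neg_sub, neg_sub]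
    convert rpow_sub_rpow_le_rpow_sub (x := u) (sub_nonneg.2 hu1) (by linarith) hα0 hα1 using 2
    ring

lemma continuous_abs_one_sub_two_mul_rpow {r : ℝ} (hr : 0 ≤ r) :
    Continuous fun u : ℝ => |1 - 2 * u| ^ r :=
  (continuous_const.sub (continuous_const.mul continuous_id)).abs.rpow_const fun _ => Or.inr hr

lemma integral_abs_one_sub_two_mul_rpow {r : ℝ} (hr : 0 ≤ r) :
    ∫ u in (0:ℝ)..1, |1 - 2 * u| ^ r = 1 / (r + 1) := by
  have hcont := continuous_abs_one_sub_two_mul_rpow hr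
  have hbase : ∫ x in (0:ℝ)..1, x ^ r = 1 / (r + 1) := by
    rw [integral_rpow (Or.inl (by linarith)), Real.one_rpow,
      Real.zero_rpow (by linarith : r + 1 ≠ 0)]
    ring
  have hleft : ∫ u in (0:ℝ)..(1 / 2), |1 - 2 * u| ^ r = 1 / 2 * (1 / (r + 1)) := by
    have hc : EqOn (fun u : ℝ => |1 - 2 * u| ^ r) (fun u => ((-2) * u + 1) ^ r)
        (uIcc 0 (1 / 2)) := by
      intro u hu
      rw [uIcc_of_le (by norm_num)] at hu
      dsimp only
      rw [abs_of_nonneg (by linarith [hu.2])]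
      ring_nf
    rw [intervalIntegral.integral_congr hc,
      intervalIntegral.integral_comp_mul_add (fun x => x ^ r) (by norm_num : (-2:ℝ) ≠ 0),
      intervalIntegral.integral_symm]
    norm_num [hbase]
  have hright : ∫ u in (1 / 2:ℝ)..1, |1 - 2 * u| ^ r = 1 / 2 * (1 / (r + 1)) := by
    have hc : EqOn (fun u : ℝ => |1 - 2 * u| ^ r) (fun u => (2 * u + (-1)) ^ r)
        (uIcc (1 / 2) 1) := by
      intro u hu
      rw [uIcc_of_le (by norm_num)] at hu
      dsimp only
      rw [abs_of_nonpos (by linarith [hu.1])]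
      ring_nf
    rw [intervalIntegral.integral_congr hc,
      intervalIntegral.integral_comp_mul_add (fun x => x ^ r) (by norm_num : (2:ℝ) ≠ 0)]
    norm_num [hbase]
  rw [← intervalIntegral.integral_add_adjacent_intervals (b := 1 / 2)
    (hcont.intervalIntegrable _ _) (hcont.intervalIntegrable _ _), hleft, hright]
  ring

lemma intervalIntegral.integral_mul_le_Lp_mul_Lq_of_nonneg {a b p q : ℝ} (hab : a ≤ b)
    (hpq : p.HolderConjugate q) {f g : ℝ → ℝ} (hf0 : ∀ x ∈ Ioc a b, 0 ≤ f x)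
    (hg0 : ∀ x ∈ Ioc a b, 0 ≤ g x)
    (hf : MemLp f (ENNReal.ofReal p) (volume.restrict (Ioc a b)))
    (hg : MemLp g (ENNReal.ofReal q) (volume.restrict (Ioc a b))) :
    ∫ x in a..b, f x * g x ≤
      (∫ x in a..b, f x ^ p) ^ (1 / p) * (∫ x in a..b, g x ^ q) ^ (1 / q) := by
  simp only [intervalIntegral.integral_of_le hab]
  exact MeasureTheory.integral_mul_le_Lp_mul_Lq_of_nonneg hpq
    ((ae_restrict_iff' measurableSet_Ioc).2 (ae_of_all _ hf0))
    ((ae_restrict_iff' measurableSet_Ioc).2 (ae_of_all _ hg0)) hf hg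

lemma integral_eq_mul_integral_unitInterval (x y : ℝ) (k : ℝ → ℝ) :
    ∫ t in x..y, k t = (y - x) * ∫ u in (0:ℝ)..1, k ((y - x) * u + x) := by
  have h := intervalIntegral.smul_integral_comp_mul_add (a := 0) (b := 1) k (y - x) x
  simp only [mul_zero, zero_add, mul_one, sub_add_cancel, smul_eq_mul] at h
  exact h.symm

lemma integral_sub_rpow_mul_eq {x y β : ℝ} (hxy : x < y) (h : ℝ → ℝ) :
    ∫ t in x..y, (t - x) ^ β * h t =
      (y - x) ^ (β + 1) * ∫ u in (0:ℝ)..1, u ^ β * h ((y - x) * u + x) := by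
  have hc : 0 < y - x := sub_pos.2 hxy
  rw [integral_eq_mul_integral_unitInterval x y, Real.rpow_add_one hc.ne',
    mul_comm _ (y - x), mul_assoc]
  congr 1
  rw [← intervalIntegral.integral_const_mul]
  refine intervalIntegral.integral_congr fun u hu => ?_
  rw [uIcc_of_le zero_le_one] at hu
  rw [add_sub_cancel_right, Real.mul_rpow hc.le hu.1, mul_assoc]

lemma integral_rsub_rpow_mul_eq {x y β : ℝ} (hxy : x < y) (h : ℝ → ℝ) :
    ∫ t in x..y, (y - t) ^ β * h t =
      (y - x) ^ (β + 1) * ∫ u in (0:ℝ)..1, (1 - u) ^ β * h ((y - x) * u + x) := by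
  have hc : 0 < y - x := sub_pos.2 hxy
  rw [integral_eq_mul_integral_unitInterval x y, Real.rpow_add_one hc.ne',
    mul_comm _ (y - x), mul_assoc]
  congr 1
  rw [← intervalIntegral.integral_const_mul]
  refine intervalIntegral.integral_congr fun u hu => ?_
  rw [uIcc_of_le zero_le_one] at hu
  rw [show y - ((y - x) * u + x) = (y - x) * (1 - u) by ring,
    Real.mul_rpow hc.le (sub_nonneg.2 hu.2), mul_assoc]

section integrationByParts

variable {F F' : ℝ → ℝ} {α : ℝ}

lemma integral_rpow_mul_eq_sub (hα : 0 < α)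
    (hF : ∀ u ∈ Icc (0:ℝ) 1, HasDerivAt F (F' u) u) (hF' : IntervalIntegrable F' volume 0 1) :
    α * ∫ u in (0:ℝ)..1, u ^ (α - 1) * F u = F 1 - ∫ u in (0:ℝ)..1, u ^ α * F' u := by
  have h := intervalIntegral.integral_mul_deriv_eq_deriv_mul_of_hasDerivAt
    (v := fun u => u ^ α) (u' := F')
    (fun u hu => (hF u (by rwa [uIcc_of_le zero_le_one] at hu)).continuousAt.continuousWithinAt)
    (Real.continuous_rpow_const hα.le).continuousOn
    (fun u hu => hF u (Ioo_subset_Icc_self (by simpa using hu)))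
    (fun u hu => Real.hasDerivAt_rpow_const (Or.inl (by simp at hu; exact hu.1.ne')))
    hF' ((intervalIntegral.intervalIntegrable_rpow' (by linarith)).const_mul α)
  rw [Real.one_rpow, Real.zero_rpow hα.ne', mul_one, mul_zero, sub_zero] at h
  calc α * ∫ u in (0:ℝ)..1, u ^ (α - 1) * F u =
        ∫ u in (0:ℝ)..1, F u * (α * u ^ (α - 1)) := by
        rw [← intervalIntegral.integral_const_mul]
        exact intervalIntegral.integral_congr fun u _ => by ring
    _ = F 1 - ∫ u in (0:ℝ)..1, u ^ α * F' u := by simp only [h, mul_comm (F' _)]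

lemma integral_one_sub_rpow_mul_eq_add (hα : 0 < α)
    (hF : ∀ u ∈ Icc (0:ℝ) 1, HasDerivAt F (F' u) u) (hF' : IntervalIntegrable F' volume 0 1) :
    α * ∫ u in (0:ℝ)..1, (1 - u) ^ (α - 1) * F u =
      F 0 + ∫ u in (0:ℝ)..1, (1 - u) ^ α * F' u := by
  have hint : IntervalIntegrable (fun u : ℝ => α * (1 - u) ^ (α - 1)) volume 0 1 := by
    have h := ((intervalIntegral.intervalIntegrable_rpow' (a := 0) (b := 1)
      (r := α - 1) (by linarith)).comp_sub_left 1).symm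
    simpa using h.const_mul α
  have h := intervalIntegral.integral_mul_deriv_eq_deriv_mul_of_hasDerivAt
    (v := fun u => -(1 - u) ^ α) (u' := F')
    (fun u hu => (hF u (by rwa [uIcc_of_le zero_le_one] at hu)).continuousAt.continuousWithinAt)
    ((continuous_const.sub continuous_id).rpow_const fun _ => Or.inr hα.le).neg.continuousOn
    (fun u hu => hF u (Ioo_subset_Icc_self (by simpa using hu)))
    (fun u hu => by
      have hu' : u ∈ Ioo (0:ℝ) 1 := by simpa using hu
      have h1 := (((hasDerivAt_id u).const_sub 1).rpow_const
        (p := α) (Or.inl (sub_ne_zero.2 hu'.2.ne'))).neg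
      exact h1.congr_deriv (by simp))
    hF' hint
  simp only [sub_self, sub_zero, Real.zero_rpow hα.ne', Real.one_rpow, neg_zero, mul_zero,
    mul_neg, mul_one, sub_neg_eq_add, zero_add, intervalIntegral.integral_neg] at h
  calc α * ∫ u in (0:ℝ)..1, (1 - u) ^ (α - 1) * F u =
        ∫ u in (0:ℝ)..1, F u * (α * (1 - u) ^ (α - 1)) := by
        rw [← intervalIntegral.integral_const_mul]
        exact intervalIntegral.integral_congr fun u _ => by ring
    _ = F 0 + ∫ u in (0:ℝ)..1, (1 - u) ^ α * F' u := by simp only [h, mul_comm (F' _)]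

end integrationByParts

/-- The weighted harmonic mean `(u / a + (1 - u) / b)⁻¹`, i.e. the point
`x y / (t x + (1 - t) y)` of harmonic convexity with `x = b`, `y = a`, `t = u`. -/
noncomputable def harmonicInterp (a b u : ℝ) : ℝ := a * b / (u * b + (1 - u) * a)

section harmonicInterp

variable {a b u : ℝ}

lemma harmonicInterp_denom_mem_Icc (hab : a ≤ b) (hu : u ∈ Icc (0:ℝ) 1) :
    u * b + (1 - u) * a ∈ Icc a b := by
  constructor <;> nlinarith [hu.1, hu.2]

lemma harmonicInterp_denom_pos (ha : 0 < a) (hab : a ≤ b) (hu : u ∈ Icc (0:ℝ) 1) :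
    0 < u * b + (1 - u) * a :=
  ha.trans_le (harmonicInterp_denom_mem_Icc hab hu).1

lemma harmonicInterp_mem_Icc (ha : 0 < a) (hab : a ≤ b) (hu : u ∈ Icc (0:ℝ) 1) :
    harmonicInterp a b u ∈ Icc a b := by
  have hA := harmonicInterp_denom_mem_Icc hab hu
  have hApos := harmonicInterp_denom_pos ha hab hu
  have hb : 0 < b := ha.trans_le hab
  rw [harmonicInterp, mem_Icc, le_div_iff₀ hApos, div_le_iff₀ hApos]
  constructor <;> nlinarith [hA.1, hA.2]

lemma harmonicInterp_zero (ha : a ≠ 0) : harmonicInterp a b 0 = b := by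
  simp [harmonicInterp, ha]

lemma harmonicInterp_one (hb : b ≠ 0) : harmonicInterp a b 1 = a := by
  simp [harmonicInterp, hb]

lemma one_div_affine_eq_harmonicInterp (ha : a ≠ 0) (hb : b ≠ 0) :
    1 / ((1 / a - 1 / b) * u + 1 / b) = harmonicInterp a b u := by
  rw [harmonicInterp]
  field_simp
  ring

lemma hasDerivAt_harmonicInterp (hA : u * b + (1 - u) * a ≠ 0) :
    HasDerivAt (harmonicInterp a b) (-(a * b * (b - a)) / (u * b + (1 - u) * a) ^ 2) u := by
  have hden : HasDerivAt (fun v => v * b + (1 - v) * a) (b - a) u := by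
    have h := ((hasDerivAt_id' u).mul_const b).add (((hasDerivAt_id' u).const_sub 1).mul_const a)
    exact h.congr_deriv (by ring)
  exact ((hasDerivAt_const u (a * b)).div hden hA).congr_deriv (by ring)

end harmonicInterp

/-- The quantity `I_f(g; α, a, b)` with `g x = 1 / x`. -/
noncomputable def harmonicHadamardGap (f : ℝ → ℝ) (α a b : ℝ) : ℝ :=
  (f a + f b) / 2 - (Real.Gamma (α + 1) / 2) * (a * b / (b - a)) ^ α *
    (Jminus α (1 / a) (f ∘ fun x => 1 / x) (1 / b) +
      Jplus α (1 / b) (f ∘ fun x => 1 / x) (1 / a))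

lemma riemannLiouville_sum_eq (f : ℝ → ℝ) {a b α : ℝ} (ha : 0 < a) (hab : a < b)
    (hα : 0 < α) :
    (Real.Gamma (α + 1) / 2) * (a * b / (b - a)) ^ α *
      (Jminus α (1 / a) (f ∘ fun x => 1 / x) (1 / b) +
        Jplus α (1 / b) (f ∘ fun x => 1 / x) (1 / a)) =
    (α * (∫ u in (0:ℝ)..1, u ^ (α - 1) * f (harmonicInterp a b u)) +
      α * ∫ u in (0:ℝ)..1, (1 - u) ^ (α - 1) * f (harmonicInterp a b u)) / 2 := by
  have hb : 0 < b := ha.trans hab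
  have hlt : 1 / b < 1 / a := one_div_lt_one_div_of_lt ha hab
  have hscale : (a * b / (b - a)) ^ α * (1 / a - 1 / b) ^ α = 1 := by
    rw [← Real.mul_rpow (by positivity) (sub_pos.2 hlt).le,
      show a * b / (b - a) * (1 / a - 1 / b) = 1 by field_simp [(sub_pos.2 hab).ne'],
      Real.one_rpow]
  have hH : ∀ u,
      (f ∘ fun x => 1 / x) ((1 / a - 1 / b) * u + 1 / b) = f (harmonicInterp a b u) :=
    fun u => congrArg f (one_div_affine_eq_harmonicInterp ha.ne' hb.ne')
  rw [Jminus, Jplus, integral_sub_rpow_mul_eq hlt, integral_rsub_rpow_mul_eq hlt]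
  simp only [hH, sub_add_cancel]
  set P := ∫ u in (0:ℝ)..1, u ^ (α - 1) * f (harmonicInterp a b u)
  set Q := ∫ u in (0:ℝ)..1, (1 - u) ^ (α - 1) * f (harmonicInterp a b u)
  have hΓ := (Real.Gamma_pos_of_pos hα).ne'
  calc Real.Gamma (α + 1) / 2 * (a * b / (b - a)) ^ α *
        (1 / Real.Gamma α * ((1 / a - 1 / b) ^ α * P) +
          1 / Real.Gamma α * ((1 / a - 1 / b) ^ α * Q))
      = ((a * b / (b - a)) ^ α * (1 / a - 1 / b) ^ α) * (Real.Gamma (α + 1) / Real.Gamma α) *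
          ((P + Q) / 2) := by ring
    _ = (α * P + α * Q) / 2 := by
      rw [hscale, Real.Gamma_add_one hα.ne', mul_div_cancel_right₀ _ hΓ]
      ring

theorem harmonicHadamardGap_eq_integral {f f' : ℝ → ℝ} {a b α : ℝ} (ha : 0 < a)
    (hab : a < b) (hα : 0 < α) (hf : ∀ x ∈ Icc a b, HasDerivAt f (f' x) x)
    (hw : IntervalIntegrable (fun u => f' (harmonicInterp a b u) / (u * b + (1 - u) * a) ^ 2)
      volume 0 1) :
    harmonicHadamardGap f α a b = a * b * (b - a) / 2 * ∫ u in (0:ℝ)..1,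
      ((1 - u) ^ α - u ^ α) * (f' (harmonicInterp a b u) / (u * b + (1 - u) * a) ^ 2) := by
  set w := fun u => f' (harmonicInterp a b u) / (u * b + (1 - u) * a) ^ 2
  set c := a * b * (b - a)
  have hF : ∀ u ∈ Icc (0:ℝ) 1,
      HasDerivAt (fun v => f (harmonicInterp a b v)) (-c * w u) u := by
    intro u hu
    have h := (hf _ (harmonicInterp_mem_Icc ha hab.le hu)).comp u
      (hasDerivAt_harmonicInterp (harmonicInterp_denom_pos ha hab.le hu).ne')
    exact h.congr_deriv (by ring)
  have hwα : IntervalIntegrable (fun u => u ^ α * w u) volume 0 1 :=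
    hw.continuousOn_mul (Real.continuous_rpow_const hα.le).continuousOn
  have hwα' : IntervalIntegrable (fun u => (1 - u) ^ α * w u) volume 0 1 :=
    hw.continuousOn_mul
      ((continuous_const.sub continuous_id).rpow_const fun _ => Or.inr hα.le).continuousOn
  have hpull : ∀ k : ℝ → ℝ,
      ∫ u in (0:ℝ)..1, k u * (-c * w u) = -c * ∫ u in (0:ℝ)..1, k u * w u := fun k => by
    rw [← intervalIntegral.integral_const_mul]
    exact intervalIntegral.integral_congr fun u _ => by ring
  have hsplit : ∫ u in (0:ℝ)..1, ((1 - u) ^ α - u ^ α) * w u =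
      (∫ u in (0:ℝ)..1, (1 - u) ^ α * w u) - ∫ u in (0:ℝ)..1, u ^ α * w u := by
    rw [← intervalIntegral.integral_sub hwα' hwα]
    exact intervalIntegral.integral_congr fun u _ => by ring
  rw [harmonicHadamardGap, riemannLiouville_sum_eq f ha hab hα,
    integral_rpow_mul_eq_sub hα hF (hw.const_mul _),
    integral_one_sub_rpow_mul_eq_add hα hF (hw.const_mul _),
    harmonicInterp_one (ha.trans hab).ne', harmonicInterp_zero ha.ne', hpull, hpull, hsplit]
  ring

lemma abs_integral_one_sub_rpow_sub_rpow_mul_le {α p q : ℝ} (hα0 : 0 < α) (hα1 : α ≤ 1)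
    (hpq : p.HolderConjugate q) {w : ℝ → ℝ}
    (hw : MemLp w (ENNReal.ofReal q) (volume.restrict (Ioc 0 1))) :
    |∫ u in (0:ℝ)..1, ((1 - u) ^ α - u ^ α) * w u| ≤
      (1 / (α * p + 1)) ^ (1 / p) * (∫ u in (0:ℝ)..1, |w u| ^ q) ^ (1 / q) := by
  have hw1 : IntervalIntegrable w volume 0 1 :=
    (intervalIntegrable_iff_integrableOn_Ioc_of_le zero_le_one).2
      (hw.integrable (by simpa using hpq.symm.lt.le))
  have hk := continuous_abs_one_sub_two_mul_rpow hα0.le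
  have hk1 :
      MemLp (fun u : ℝ => |1 - 2 * u| ^ α) (ENNReal.ofReal p) (volume.restrict (Ioc 0 1)) :=
    MemLp.of_bound hk.aestronglyMeasurable 1 (by
      rw [ae_restrict_iff' measurableSet_Ioc]
      refine ae_of_all _ fun u hu => ?_
      rw [Real.norm_of_nonneg (by positivity)]
      exact Real.rpow_le_one (abs_nonneg _) (abs_le.2 ⟨by linarith [hu.2], by linarith [hu.1]⟩)
        hα0.le)
  have hholder := intervalIntegral.integral_mul_le_Lp_mul_Lq_of_nonneg zero_le_one hpq
    (fun u _ => by positivity) (fun u _ => norm_nonneg (w u)) hk1 hw.norm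
  have hmoment : ∫ u in (0:ℝ)..1, (|1 - 2 * u| ^ α) ^ p = 1 / (α * p + 1) := by
    simp_rw [← Real.rpow_mul (abs_nonneg _)]
    exact integral_abs_one_sub_two_mul_rpow (by nlinarith [hpq.pos])
  simp only [hmoment, Real.norm_eq_abs] at hholder
  calc |∫ u in (0:ℝ)..1, ((1 - u) ^ α - u ^ α) * w u|
      ≤ ∫ u in (0:ℝ)..1, |((1 - u) ^ α - u ^ α) * w u| :=
        intervalIntegral.abs_integral_le_integral_abs zero_le_one
    _ ≤ ∫ u in (0:ℝ)..1, |1 - 2 * u| ^ α * |w u| := by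
        refine intervalIntegral.integral_mono_on zero_le_one ?_
          (hw1.abs.continuousOn_mul hk.continuousOn) fun u hu => ?_
        · exact (hw1.continuousOn_mul (((continuous_const.sub continuous_id).rpow_const
            fun _ => Or.inr hα0.le).sub (Real.continuous_rpow_const hα0.le)).continuousOn).abs
        · rw [abs_mul]
          exact mul_le_mul_of_nonneg_right
            (abs_one_sub_rpow_sub_rpow_le hα0.le hα1 hu.1 hu.2) (abs_nonneg _)
    _ ≤ _ := hholder

lemma Real.Gamma_three : Real.Gamma 3 = 2 := by
  rw [show (3:ℝ) = 2 + 1 by norm_num, Real.Gamma_add_one two_ne_zero, Real.Gamma_two, mul_one]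

lemma F21_one_three (r z : ℝ) :
    F21 r 1 3 z = 2 * ∫ s in (0:ℝ)..1, (1 - s) * (1 - z * s) ^ (-r) := by
  rw [F21, Real.Gamma_one, show (3:ℝ) - 1 = 2 by norm_num, Real.Gamma_two, Real.Gamma_three]
  norm_num

lemma F21_two_three (r z : ℝ) :
    F21 r 2 3 z = 2 * ∫ s in (0:ℝ)..1, s * (1 - z * s) ^ (-r) := by
  rw [F21, Real.Gamma_two, show (3:ℝ) - 2 = 1 by norm_num, Real.Gamma_one, Real.Gamma_three]
  norm_num

lemma integral_affine_mul_rpow_eq_F21 {a b : ℝ} (ha : 0 < a) (hb : 0 < b) (r X Y : ℝ) :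
    ∫ u in (0:ℝ)..1, (u * X + (1 - u) * Y) * (u * b + (1 - u) * a) ^ (-r) =
      b ^ (-r) * ((F21 r 2 3 (1 - a / b) * Y + F21 r 1 3 (1 - a / b) * X) / 2) := by
  set z := 1 - a / b with hz
  have hpos : ∀ s ∈ uIcc (0:ℝ) 1, 0 < 1 - z * s := by
    intro s hs
    rw [uIcc_of_le zero_le_one] at hs
    have hz1 : z < 1 := by rw [hz]; linarith [div_pos ha hb]
    rcases hs.2.lt_or_eq with hs1 | rfl
    · nlinarith [hs.1]
    · linarith
  have hcont : ContinuousOn (fun s : ℝ => (1 - z * s) ^ (-r)) (uIcc 0 1) :=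
    (continuousOn_const.sub (continuousOn_const.mul continuousOn_id)).rpow_const
      fun s hs => Or.inl (hpos s hs).ne'
  have hint₁ : IntervalIntegrable (fun s : ℝ => (1 - s) * (1 - z * s) ^ (-r)) volume 0 1 :=
    ((continuousOn_const.sub continuousOn_id).mul hcont).intervalIntegrable
  have hint₂ : IntervalIntegrable (fun s : ℝ => s * (1 - z * s) ^ (-r)) volume 0 1 :=
    (continuousOn_id.mul hcont).intervalIntegrable
  have hreflect := intervalIntegral.integral_comp_sub_left
    (fun u => (u * X + (1 - u) * Y) * (u * b + (1 - u) * a) ^ (-r)) (a := 0) (b := 1) 1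
  simp only [sub_zero, sub_self] at hreflect
  rw [← hreflect, F21_one_three, F21_two_three]
  have hpoint : ∀ s ∈ uIcc (0:ℝ) 1,
      ((1 - s) * X + (1 - (1 - s)) * Y) * ((1 - s) * b + (1 - (1 - s)) * a) ^ (-r) =
        b ^ (-r) * (X * ((1 - s) * (1 - z * s) ^ (-r)) + Y * (s * (1 - z * s) ^ (-r))) := by
    intro s hs
    rw [show (1 - s) * b + (1 - (1 - s)) * a = b * (1 - z * s) by rw [hz]; field_simp; ring,
      Real.mul_rpow hb.le (hpos s hs).le]
    ring
  rw [intervalIntegral.integral_congr hpoint, intervalIntegral.integral_const_mul,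
    intervalIntegral.integral_add (hint₁.const_mul X) (hint₂.const_mul Y),
    intervalIntegral.integral_const_mul, intervalIntegral.integral_const_mul]
  ring

lemma abs_div_sq_rpow (x : ℝ) {A : ℝ} (hA : 0 < A) (q : ℝ) :
    |x / A ^ 2| ^ q = |x| ^ q * A ^ (-(2 * q)) := by
  rw [abs_div, abs_of_nonneg (sq_nonneg A), Real.div_rpow (abs_nonneg x) (sq_nonneg A),
    ← Real.rpow_natCast, ← Real.rpow_mul hA.le, Real.rpow_neg hA.le, div_eq_mul_inv]
  norm_num

section harmonicConvex

variable {f f' : ℝ → ℝ} {a b q : ℝ}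

lemma integral_abs_div_sq_rpow_le_F21 (ha : 0 < a) (hab : a ≤ b)
    (hconv : ∀ u ∈ Icc (0:ℝ) 1,
      |f' (harmonicInterp a b u)| ^ q ≤ u * |f' a| ^ q + (1 - u) * |f' b| ^ q) :
    ∫ u in (0:ℝ)..1, |f' (harmonicInterp a b u) / (u * b + (1 - u) * a) ^ 2| ^ q ≤
      b ^ (-(2 * q)) * ((F21 (2 * q) 2 3 (1 - a / b) * |f' b| ^ q +
        F21 (2 * q) 1 3 (1 - a / b) * |f' a| ^ q) / 2) := by
  have hA := fun u (hu : u ∈ Icc (0:ℝ) 1) => harmonicInterp_denom_pos ha hab hu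
  rw [← integral_affine_mul_rpow_eq_F21 ha (ha.trans_le hab),
    intervalIntegral.integral_of_le zero_le_one, intervalIntegral.integral_of_le zero_le_one]
  have hcont : ContinuousOn (fun u : ℝ => (u * |f' a| ^ q + (1 - u) * |f' b| ^ q) *
      (u * b + (1 - u) * a) ^ (-(2 * q))) (Icc 0 1) := by
    refine ContinuousOn.mul (by fun_prop) ?_
    exact (Continuous.continuousOn (by fun_prop)).rpow_const fun u hu => Or.inl (hA u hu).ne'
  refine integral_mono_of_nonneg (ae_of_all _ fun _ => by positivity)
    ((hcont.integrableOn_Icc).mono_set Ioc_subset_Icc_self)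
    ((ae_restrict_iff' measurableSet_Ioc).2 (ae_of_all _ fun u hu => ?_))
  have hu := Ioc_subset_Icc_self hu
  dsimp only
  rw [abs_div_sq_rpow _ (hA u hu)]
  exact mul_le_mul_of_nonneg_right (hconv u hu) (Real.rpow_nonneg (hA u hu).le _)

lemma memLp_deriv_comp_harmonicInterp_div_sq (ha : 0 < a) (hab : a ≤ b) (hq : 0 < q)
    (hf : ∀ x ∈ Icc a b, HasDerivAt f (f' x) x)
    (hconv : ∀ u ∈ Icc (0:ℝ) 1,
      |f' (harmonicInterp a b u)| ^ q ≤ u * |f' a| ^ q + (1 - u) * |f' b| ^ q) (p : ENNReal) :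
    MemLp (fun u => f' (harmonicInterp a b u) / (u * b + (1 - u) * a) ^ 2) p
      (volume.restrict (Ioc 0 1)) := by
  set C := (|f' a| ^ q + |f' b| ^ q) ^ (1 / q)
  have hbound : ∀ u ∈ Icc (0:ℝ) 1, |f' (harmonicInterp a b u)| ≤ C := by
    intro u hu
    have hX := Real.rpow_nonneg (abs_nonneg (f' a)) q
    have hY := Real.rpow_nonneg (abs_nonneg (f' b)) q
    have hle : |f' (harmonicInterp a b u)| ^ q ≤ |f' a| ^ q + |f' b| ^ q :=
      (hconv u hu).trans (by nlinarith [hu.1, hu.2])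
    calc |f' (harmonicInterp a b u)| = (|f' (harmonicInterp a b u)| ^ q) ^ (1 / q) := by
          rw [← Real.rpow_mul (abs_nonneg _), mul_one_div_cancel hq.ne', Real.rpow_one]
      _ ≤ C := Real.rpow_le_rpow (by positivity) hle (by positivity)
  have hmeas : AEStronglyMeasurable
      (fun u => f' (harmonicInterp a b u) / (u * b + (1 - u) * a) ^ 2)
      (volume.restrict (Ioc 0 1)) := by
    have hderiv :
        Measurable fun u => deriv f (harmonicInterp a b u) / (u * b + (1 - u) * a) ^ 2 := by
      unfold harmonicInterp; fun_prop
    refine hderiv.aestronglyMeasurable.congr ((ae_restrict_iff' measurableSet_Ioc).2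
      (ae_of_all _ fun u hu => ?_))
    dsimp only
    rw [(hf _ (harmonicInterp_mem_Icc ha hab (Ioc_subset_Icc_self hu))).deriv]
  refine MemLp.of_bound hmeas (C / a ^ 2) ((ae_restrict_iff' measurableSet_Ioc).2
    (ae_of_all _ fun u hu => ?_))
  have hu := Ioc_subset_Icc_self hu
  have hA := harmonicInterp_denom_mem_Icc hab hu
  rw [Real.norm_eq_abs, abs_div, abs_of_nonneg (sq_nonneg (u * b + (1 - u) * a))]
  exact div_le_div₀ ((abs_nonneg _).trans (hbound u hu)) (hbound u hu) (by positivity)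
    (pow_le_pow_left₀ ha.le hA.1 2)

end harmonicConvex

theorem abs_harmonicHadamardGap_le {f f' : ℝ → ℝ} {a b p q α : ℝ} (ha : 0 < a)
    (hab : a < b) (hpq : p.HolderConjugate q) (hα0 : 0 < α) (hα1 : α ≤ 1)
    (hf : ∀ x ∈ Icc a b, HasDerivAt f (f' x) x)
    (hconv : ∀ u ∈ Icc (0:ℝ) 1,
      |f' (harmonicInterp a b u)| ^ q ≤ u * |f' a| ^ q + (1 - u) * |f' b| ^ q) :
    |harmonicHadamardGap f α a b| ≤ a * (b - a) / (2 * b) * (1 / (α * p + 1)) ^ (1 / p) *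
      ((F21 (2 * q) 2 3 (1 - a / b) * |f' b| ^ q + F21 (2 * q) 1 3 (1 - a / b) * |f' a| ^ q) / 2)
        ^ (1 / q) := by
  have hb : 0 < b := ha.trans hab
  have hp := hpq.pos
  have hq := hpq.symm.pos
  have hw := memLp_deriv_comp_harmonicInterp_div_sq ha hab.le hq hf hconv
  have hw1 := (intervalIntegrable_iff_integrableOn_Ioc_of_le zero_le_one).2
    ((hw 1).integrable le_rfl)
  have hbound := integral_abs_div_sq_rpow_le_F21 ha hab.le hconv
  set S := (F21 (2 * q) 2 3 (1 - a / b) * |f' b| ^ q + F21 (2 * q) 1 3 (1 - a / b) * |f' a| ^ q) / 2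
  have hnn :
      0 ≤ ∫ u in (0:ℝ)..1, |f' (harmonicInterp a b u) / (u * b + (1 - u) * a) ^ 2| ^ q :=
    intervalIntegral.integral_nonneg zero_le_one fun u _ => by positivity
  -- `S ≥ 0` is read off from the bound itself rather than from an integral formula for `₂F₁`.
  have hS : 0 ≤ S := (mul_nonneg_iff_of_pos_left (by positivity)).1 (hnn.trans hbound)
  rw [harmonicHadamardGap_eq_integral ha hab hα0 hf hw1, abs_mul,
    abs_of_pos (by have := sub_pos.2 hab; positivity)]
  calc _ ≤ a * b * (b - a) / 2 * ((1 / (α * p + 1)) ^ (1 / p) *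
        (b ^ (-(2 * q)) * S) ^ (1 / q)) := by
        gcongr
        refine (abs_integral_one_sub_rpow_sub_rpow_mul_le hα0 hα1 hpq (hw _)).trans ?_
        gcongr
    _ = _ := by
      rw [Real.mul_rpow (by positivity) hS, ← Real.rpow_mul hb.le,
        show -(2 * q) * (1 / q) = -2 by field_simp, Real.rpow_neg hb.le,
        Real.rpow_two]
      field_simp

theorem stmt_18_general (I : Set ℝ) (hI : I.OrdConnected) (hIpos : I ⊆ Set.Ioi (0:ℝ))
    (f f' : ℝ → ℝ) (hdiff : ∀ x ∈ interior I, HasDerivAt f (f' x) x)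
    (a b : ℝ) (ha : a ∈ interior I) (hb : b ∈ interior I) (hab : a < b)
    (p q : ℝ) (hq : 1 < q) (hpq : 1/p + 1/q = 1)
    (α : ℝ) (hα0 : 0 < α) (hα1 : α ≤ 1)
    (hconv : ∀ x ∈ Set.Icc a b, ∀ y ∈ Set.Icc a b, ∀ t ∈ Set.Icc (0:ℝ) 1,
      |f' (x * y / (t * x + (1 - t) * y))| ^ q ≤ t * |f' y| ^ q + (1 - t) * |f' x| ^ q)
    (g : ℝ → ℝ) (hg : g = fun x => 1 / x) :
    |(f a + f b) / 2 - (Real.Gamma (α + 1) / 2) * (a * b / (b - a)) ^ α *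
        (Jminus α (1 / a) (f ∘ g) (1 / b) + Jplus α (1 / b) (f ∘ g) (1 / a))| ≤
      (a * (b - a) / (2 * b)) * (1 / (α * p + 1)) ^ (1/p) *
        ((F21 (2*q) 2 3 (1 - a/b) * |f' b| ^ q + F21 (2*q) 1 3 (1 - a/b) * |f' a| ^ q) / 2)
          ^ (1/q) := by
  subst hg
  have ha0 : 0 < a := hIpos (interior_subset ha)
  have hpq' : p.HolderConjugate q :=
    (Real.holderConjugate_iff.2 ⟨hq, by simpa [add_comm] using hpq⟩).symm
  have hf : ∀ x ∈ Icc a b, HasDerivAt f (f' x) x :=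
    fun x hx => hdiff x (hI.interior.out ha hb hx)
  refine abs_harmonicHadamardGap_le ha0 hab hpq' hα0 hα1 hf fun u hu => ?_
  simpa only [harmonicInterp, mul_comm b a] using
    hconv b ⟨hab.le, le_rfl⟩ a ⟨le_rfl, hab.le⟩ u hu

theorem stmt_18 (I : Set ℝ) (hI : I.OrdConnected) (hIpos : I ⊆ Set.Ioi (0:ℝ))
    (f f' : ℝ → ℝ) (hdiff : ∀ x ∈ interior I, HasDerivAt f (f' x) x)
    (a b : ℝ) (ha : a ∈ interior I) (hb : b ∈ interior I) (hab : a < b)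
    (hint : IntervalIntegrable f' MeasureTheory.volume a b)
    (p q : ℝ) (hq : 1 < q) (hpq : 1/p + 1/q = 1)
    (α : ℝ) (hα0 : 0 < α) (hα1 : α ≤ 1)
    (hconv : ∀ x ∈ Set.Icc a b, ∀ y ∈ Set.Icc a b, ∀ t ∈ Set.Icc (0:ℝ) 1,
      |f' (x * y / (t * x + (1 - t) * y))| ^ q ≤ t * |f' y| ^ q + (1 - t) * |f' x| ^ q)
    (g : ℝ → ℝ) (hg : g = fun x => 1 / x) :
    |(f a + f b) / 2 - (Real.Gamma (α + 1) / 2) * (a * b / (b - a)) ^ α *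
        (Jminus α (1 / a) (f ∘ g) (1 / b) + Jplus α (1 / b) (f ∘ g) (1 / a))| ≤
      (a * (b - a) / (2 * b)) * (1 / (α * p + 1)) ^ (1/p) *
        ((F21 (2*q) 2 3 (1 - a/b) * |f' b| ^ q + F21 (2*q) 1 3 (1 - a/b) * |f' a| ^ q) / 2)
          ^ (1/q) :=
  stmt_18_general I hI hIpos f f' hdiff a b ha hb hab p q hq hpq α hα0 hα1 hconv g hg
end
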